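/- arXiv:2008.02261 — 6 statements merged into one kernel-verified Lean document; each statement's English description precedes it below -/
import Mathlib

section
/- Let H be a real Hilbert space, let f : H → ℝ be a convex function of class C¹ whose set of minimizers argmin f is nonempty, and let r > 0. Let x : [0,∞) → H be twice continuously differentiable and satisfy the heavy ball with friction equation ẍ(t) + r ẋ(t) + ∇f(x(t)) = 0 for all t ≥ 0, with x(0) = x₀ and ẋ(0) = x₁. Set C(x₀,x₁) := (3/(2r))(f(x₀) − min f) + r·dist(x₀, argmin f)² + (5/(4r))‖x₁‖². Then: (i) ∫₀^∞ (f(x(t)) − min f) dt < ∞ and ∫₀^∞ t‖ẋ(t)‖² dt < ∞; (ii) for all t > 0, f(x(t)) − min f ≤ C(x₀,x₁)/t and ‖ẋ(t)‖ ≤ √(2C(x₀,x₁))/√t; (iii) t·(f(x(t)) − min f) → 0 and √t·‖ẋ(t)‖ → 0 as t → ∞. -/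
/-!
Along a trajectory the energy `E = f(x) - min f + ‖ẋ‖²/2` decreases at rate `r‖ẋ‖²`, and for
every minimizer `w` the anchored energy `W = (r/2)‖x - w + ẋ/r‖² + (f(x) - min f)/r` has
derivative `-⟪∇f(x), x - w⟫ ≤ -(f(x) - min f)` by convexity. Hence `∫ (f(x) - min f) ≤ W(0)`,
`∫ ‖ẋ‖² ≤ E(0)/r`, and `tE + W` grows at most at rate `‖ẋ‖²/2 - rt‖ẋ‖²`, so that
`tE(t) + r∫₀ᵗ s‖ẋ(s)‖² ds ≤ W(0) + E(0)/(2r)`; optimizing over `w` bounds the right side by `C`.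
Finally `tE` has the integrable derivative `E - rt‖ẋ‖²`, so it converges, and the limit is `0`
because `E` is integrable on `(0, ∞)` while `1/t` is not.
-/

open Set Filter Topology MeasureTheory Metric
open scoped RealInnerProductSpace

theorem ConvexOn.apply_add_le_of_hasFDerivAt {E : Type*} [NormedAddCommGroup E]
    [NormedSpace ℝ E] {f : E → ℝ} {f' : E →L[ℝ] ℝ} {a : E} (hf : ConvexOn ℝ univ f)
    (hd : HasFDerivAt f f' a) (b : E) : f a + f' (b - a) ≤ f b := by
  have hline : ConvexOn ℝ univ (f ∘ AffineMap.lineMap (k := ℝ) a b) := by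
    simpa using hf.comp_affineMap (AffineMap.lineMap (k := ℝ) a b)
  have hderiv : HasDerivAt (f ∘ AffineMap.lineMap (k := ℝ) a b) (f' (b - a)) 0 := by
    refine HasFDerivAt.comp_hasDerivAt (0 : ℝ) ?_ AffineMap.hasDerivAt_lineMap
    simpa using hd
  have := hline.le_slope_of_hasDerivAt (mem_univ 0) (mem_univ 1) one_pos hderiv
  simp only [slope_def_field, Function.comp_apply, AffineMap.lineMap_apply_zero,
    AffineMap.lineMap_apply_one, sub_zero, div_one] at this
  linarith

theorem ConvexOn.sub_le_inner_gradient {H : Type*} [NormedAddCommGroup H]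
    [InnerProductSpace ℝ H] [CompleteSpace H] {f : H → ℝ} {a : H} (hf : ConvexOn ℝ univ f)
    (hd : DifferentiableAt ℝ f a) (b : H) : f a - f b ≤ ⟪gradient f a, a - b⟫ := by
  have := hf.apply_add_le_of_hasFDerivAt hd.hasGradientAt.hasFDerivAt b
  rw [InnerProductSpace.toDual_apply_apply, ← neg_sub a b, inner_neg_right] at this
  linarith

theorem sub_le_integral_of_hasDerivWithinAt_Ici {φ φ' ψ : ℝ → ℝ} {s a b : ℝ}
    (hφ : ∀ t ∈ Ici s, HasDerivWithinAt φ (φ' t) (Ici s) t) (hψ : ContinuousOn ψ (Ici s))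
    (hle : ∀ t ∈ Ici s, φ' t ≤ ψ t) (ha : s ≤ a) (hab : a ≤ b) :
    φ b - φ a ≤ ∫ t in a..b, ψ t :=
  intervalIntegral.sub_le_integral_of_hasDeriv_right_of_le hab
    (fun t ht ↦ (hφ t (ha.trans ht.1)).continuousWithinAt.mono fun _ hu ↦ ha.trans hu.1)
    (fun t ht ↦ (hφ t (ha.trans ht.1.le)).mono fun _ hu ↦ (ha.trans_lt (ht.1.trans hu)).le)
    ((hψ.mono fun _ hu ↦ ha.trans hu.1).integrableOn_Icc)
    (fun t ht ↦ hle t (ha.trans ht.1.le))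

theorem integrableOn_Ioi_of_integral_le {F : ℝ → ℝ} {s K : ℝ} (hc : ContinuousOn F (Ici s))
    (hnn : ∀ t ∈ Ici s, 0 ≤ F t) (hK : ∀ T, s ≤ T → ∫ t in s..T, F t ≤ K) :
    IntegrableOn F (Ioi s) := by
  refine integrableOn_Ioi_of_intervalIntegral_norm_bounded K s (l := atTop) (fun T ↦ ?_)
    tendsto_id ?_
  · exact ((hc.mono Icc_subset_Ici_self).integrableOn_Icc).mono_set Ioc_subset_Icc_self
  · filter_upwards [eventually_ge_atTop s] with T hT
    refine le_of_eq_of_le (intervalIntegral.integral_congr fun t ht ↦ ?_) (hK T hT)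
    rw [id, uIcc_of_le hT] at ht
    exact Real.norm_of_nonneg (hnn t ht.1)

theorem eq_zero_of_tendsto_mul_of_integrableOn_Ioi {φ : ℝ → ℝ} {s ℓ : ℝ}
    (hφ : IntegrableOn φ (Ioi s)) (hlim : Tendsto (fun t ↦ t * φ t) atTop (𝓝 ℓ)) : ℓ = 0 := by
  by_contra hℓ
  have hℓpos : 0 < |ℓ| / 2 := by positivity
  obtain ⟨T₀, hT₀⟩ := eventually_atTop.1 (hlim.abs.eventually (lt_mem_nhds (half_lt_self
    (abs_pos.2 hℓ))))
  set T := max T₀ (max s 1)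
  have hT : 0 < T := lt_max_of_lt_right (lt_max_of_lt_right one_pos)
  -- on `(T, ∞)`, `t⁻¹ ≤ (2 / |ℓ|) |φ t|`
  refine not_integrableOn_Ioi_inv (a := T) (Integrable.mono' ((hφ.mono_set (Ioi_subset_Ioi
    (le_max_of_le_right (le_max_left _ _)))).norm.const_mul (|ℓ| / 2)⁻¹)
    measurable_inv.aestronglyMeasurable (ae_restrict_of_forall_mem measurableSet_Ioi
    fun t ht ↦ ?_))
  have htT : T ≤ t := le_of_lt ht
  have ht : 0 < t := hT.trans_le htT
  have h := hT₀ t ((le_max_left _ _).trans htT)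
  rw [abs_mul, abs_of_pos ht] at h
  rw [Real.norm_of_nonneg (inv_nonneg.2 ht.le), Real.norm_eq_abs]
  field_simp
  linarith

theorem le_add_mul_infDist_sq {α : Type*} [PseudoMetricSpace α] {S : Set α} {p : α}
    {A B c : ℝ} (hS : S.Nonempty) (hc : 0 ≤ c) (h : ∀ w ∈ S, A ≤ B + c * dist p w ^ 2) :
    A ≤ B + c * infDist p S ^ 2 := by
  by_contra! hlt
  have hcont : ContinuousAt (fun δ : ℝ ↦ B + c * δ ^ 2) (infDist p S) := by fun_prop
  obtain ⟨δ, hδA, hδ⟩ := ((hcont.eventually (gt_mem_nhds hlt)).filter_mono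
    nhdsWithin_le_nhds |>.and (self_mem_nhdsWithin (s := Ioi (infDist p S)))).exists
  obtain ⟨w, hwS, hw⟩ := (infDist_lt_iff hS).1 hδ
  have hsq : c * dist p w ^ 2 ≤ c * δ ^ 2 :=
    mul_le_mul_of_nonneg_left (pow_le_pow_left₀ dist_nonneg hw.le 2) hc
  linarith [h w hwS]

theorem le_div_and_le_sqrt_div_of_mul_add_sq_le {t g q C : ℝ} (ht : 0 < t) (hg : 0 ≤ g)
    (h : t * (g + q ^ 2 / 2) ≤ C) : g ≤ C / t ∧ q ≤ √(2 * C) / √t := by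
  have hq : 0 ≤ t * q ^ 2 := by positivity
  refine ⟨(le_div_iff₀ ht).2 (by nlinarith), ?_⟩
  rw [← Real.sqrt_div' _ ht.le]
  exact (le_abs_self q).trans (Real.abs_le_sqrt ((le_div_iff₀ ht).2 (by nlinarith)))

theorem tendsto_mul_and_sqrt_mul_of_tendsto_mul_add_sq {g q : ℝ → ℝ} (hg : ∀ t, 0 ≤ g t)
    (hq : ∀ t, 0 ≤ q t) (h : Tendsto (fun t ↦ t * (g t + q t ^ 2 / 2)) atTop (𝓝 0)) :
    Tendsto (fun t ↦ t * g t) atTop (𝓝 0) ∧ Tendsto (fun t ↦ √t * q t) atTop (𝓝 0) := by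
  constructor
  · refine squeeze_zero' ?_ ?_ h <;> filter_upwards [eventually_ge_atTop 0] with t ht
    · exact mul_nonneg ht (hg t)
    · nlinarith [hg t, sq_nonneg (q t)]
  · have hsq : Tendsto (fun t ↦ t * q t ^ 2) atTop (𝓝 0) := by
      refine squeeze_zero' ?_ ?_ (by simpa using h.const_mul 2) <;>
        filter_upwards [eventually_ge_atTop 0] with t ht
      · positivity
      · nlinarith [hg t]
    refine (by simpa using hsq.sqrt : Tendsto (fun t ↦ √(t * q t ^ 2)) atTop (𝓝 0)).congr' ?_
    filter_upwards [eventually_ge_atTop 0] with t ht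
    rw [Real.sqrt_mul ht, Real.sqrt_sq (hq t)]

section HeavyBall

variable {H : Type*} [NormedAddCommGroup H] {f : H → ℝ} {r : ℝ} {x v : ℝ → H} {w : H}

noncomputable def energy (f : H → ℝ) (x v : ℝ → H) (w : H) (t : ℝ) : ℝ :=
  f (x t) - f w + ‖v t‖ ^ 2 / 2

theorem energy_nonneg (hw : ∀ y, f w ≤ f y) (t : ℝ) : 0 ≤ energy f x v w t := by
  have := sub_nonneg.2 (hw (x t))
  unfold energy
  positivity

variable [InnerProductSpace ℝ H]

noncomputable def anchoredEnergy (f : H → ℝ) (r : ℝ) (x v : ℝ → H) (w : H) (t : ℝ) : ℝ :=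
  r / 2 * ‖x t - w + r⁻¹ • v t‖ ^ 2 + (f (x t) - f w) / r

theorem anchoredEnergy_nonneg (hr : 0 < r) (hw : ∀ y, f w ≤ f y) (t : ℝ) :
    0 ≤ anchoredEnergy f r x v w t := by
  have := sub_nonneg.2 (hw (x t))
  unfold anchoredEnergy
  positivity

theorem anchoredEnergy_add_energy_div_le (hr : 0 < r) (t : ℝ) :
    anchoredEnergy f r x v w t + energy f x v w t / (2 * r)
      ≤ 3 / (2 * r) * (f (x t) - f w) + r * ‖x t - w‖ ^ 2 + 5 / (4 * r) * ‖v t‖ ^ 2 := by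
  have htri : ‖x t - w + r⁻¹ • v t‖ ≤ ‖x t - w‖ + r⁻¹ * ‖v t‖ := by
    simpa [norm_smul, abs_of_pos hr] using norm_add_le (x t - w) (r⁻¹ • v t)
  have hsq : ‖x t - w + r⁻¹ • v t‖ ^ 2 ≤ 2 * ‖x t - w‖ ^ 2 + 2 * (r⁻¹ * ‖v t‖) ^ 2 := by
    nlinarith [norm_nonneg (x t - w + r⁻¹ • v t), sq_nonneg (‖x t - w‖ - r⁻¹ * ‖v t‖)]
  have hid : r / 2 * (2 * ‖x t - w‖ ^ 2 + 2 * (r⁻¹ * ‖v t‖) ^ 2) + (f (x t) - f w) / r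
      + (f (x t) - f w + ‖v t‖ ^ 2 / 2) / (2 * r)
      = 3 / (2 * r) * (f (x t) - f w) + r * ‖x t - w‖ ^ 2 + 5 / (4 * r) * ‖v t‖ ^ 2 := by
    field_simp
    ring
  unfold anchoredEnergy energy
  linarith [mul_le_mul_of_nonneg_left hsq (half_pos hr).le]

variable [CompleteSpace H]

structure IsHeavyBallTrajectory (f : H → ℝ) (r : ℝ) (x v : ℝ → H) : Prop where
  hasDerivWithinAt_position : ∀ t ∈ Ici (0 : ℝ), HasDerivWithinAt x (v t) (Ici 0) t
  hasDerivWithinAt_velocity : ∀ t ∈ Ici (0 : ℝ),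
    HasDerivWithinAt v (-(r • v t + gradient f (x t))) (Ici 0) t

namespace IsHeavyBallTrajectory

variable {t : ℝ}

theorem continuousOn_velocity (hx : IsHeavyBallTrajectory f r x v) : ContinuousOn v (Ici 0) :=
  fun t ht ↦ (hx.hasDerivWithinAt_velocity t ht).continuousWithinAt

theorem hasDerivWithinAt_comp_position (hx : IsHeavyBallTrajectory f r x v)
    (hf : Differentiable ℝ f) (ht : t ∈ Ici 0) :
    HasDerivWithinAt (fun s ↦ f (x s)) ⟪gradient f (x t), v t⟫ (Ici 0) t := by
  have h := (hf (x t)).hasFDerivAt.comp_hasDerivWithinAt t (hx.hasDerivWithinAt_position t ht)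
  rwa [← inner_gradient_left] at h

theorem continuousOn_comp_position (hx : IsHeavyBallTrajectory f r x v) (hf : Differentiable ℝ f) :
    ContinuousOn (fun s ↦ f (x s)) (Ici 0) :=
  fun _ ht ↦ (hx.hasDerivWithinAt_comp_position hf ht).continuousWithinAt

theorem hasDerivWithinAt_energy (hx : IsHeavyBallTrajectory f r x v) (hf : Differentiable ℝ f)
    (w : H) (ht : t ∈ Ici 0) :
    HasDerivWithinAt (energy f x v w) (-(r * ‖v t‖ ^ 2)) (Ici 0) t := by
  refine (((hx.hasDerivWithinAt_comp_position hf ht).sub_const (f w)).add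
    ((hx.hasDerivWithinAt_velocity t ht).norm_sq.div_const 2)).congr_deriv ?_
  rw [inner_neg_right, inner_add_right, real_inner_smul_right, real_inner_self_eq_norm_sq,
    real_inner_comm]
  ring

theorem hasDerivWithinAt_anchoredEnergy (hx : IsHeavyBallTrajectory f r x v)
    (hf : Differentiable ℝ f) (hr : r ≠ 0) (w : H) (ht : t ∈ Ici 0) :
    HasDerivWithinAt (anchoredEnergy f r x v w) (-⟪gradient f (x t), x t - w⟫) (Ici 0) t := by
  have hu : HasDerivWithinAt (fun s ↦ x s - w + r⁻¹ • v s) (-(r⁻¹ • gradient f (x t)))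
      (Ici 0) t := by
    refine (((hx.hasDerivWithinAt_position t ht).sub_const w).add
      ((hx.hasDerivWithinAt_velocity t ht).const_smul r⁻¹)).congr_deriv ?_
    rw [smul_neg, smul_add, smul_smul, inv_mul_cancel₀ hr, one_smul]
    abel
  refine ((hu.norm_sq.const_mul (r / 2)).add
    (((hx.hasDerivWithinAt_comp_position hf ht).sub_const (f w)).div_const r)).congr_deriv ?_
  simp only [inner_neg_right, inner_add_left, real_inner_smul_right,
    real_inner_comm (gradient f (x t))]
  field_simp
  ring

theorem integral_norm_sq_le (hx : IsHeavyBallTrajectory f r x v) (hf : Differentiable ℝ f)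
    (hr : 0 < r) (hw : ∀ y, f w ≤ f y) {T : ℝ} (hT : 0 ≤ T) :
    ∫ t in 0..T, ‖v t‖ ^ 2 ≤ energy f x v w 0 / r := by
  have h := sub_le_integral_of_hasDerivWithinAt_Ici (ψ := fun t ↦ -(r * ‖v t‖ ^ 2))
    (fun t ht ↦ hx.hasDerivWithinAt_energy hf w ht)
    (continuousOn_const.mul (hx.continuousOn_velocity.norm.pow 2)).neg (fun _ _ ↦ le_rfl) le_rfl hT
  rw [intervalIntegral.integral_neg, intervalIntegral.integral_const_mul] at h
  rw [le_div_iff₀ hr]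
  linarith [energy_nonneg (x := x) (v := v) hw T]

theorem integral_comp_position_sub_le_anchoredEnergy (hx : IsHeavyBallTrajectory f r x v)
    (hf : Differentiable ℝ f) (hconv : ConvexOn ℝ univ f) (hr : 0 < r) (hw : ∀ y, f w ≤ f y)
    {T : ℝ} (hT : 0 ≤ T) :
    ∫ t in 0..T, (f (x t) - f w) ≤ anchoredEnergy f r x v w 0 := by
  have h := sub_le_integral_of_hasDerivWithinAt_Ici (ψ := fun t ↦ -(f (x t) - f w))
    (fun t ht ↦ hx.hasDerivWithinAt_anchoredEnergy hf hr.ne' w ht)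
    ((hx.continuousOn_comp_position hf).sub continuousOn_const).neg
    (fun t _ ↦ neg_le_neg (hconv.sub_le_inner_gradient (hf (x t)) w)) le_rfl hT
  rw [intervalIntegral.integral_neg] at h
  linarith [anchoredEnergy_nonneg (x := x) (v := v) hr hw T]

theorem mul_energy_add_integral_le (hx : IsHeavyBallTrajectory f r x v)
    (hf : Differentiable ℝ f) (hconv : ConvexOn ℝ univ f) (hr : 0 < r) (hw : ∀ y, f w ≤ f y)
    {T : ℝ} (hT : 0 ≤ T) :
    T * energy f x v w T + r * ∫ t in 0..T, t * ‖v t‖ ^ 2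
      ≤ anchoredEnergy f r x v w 0 + energy f x v w 0 / (2 * r) := by
  have hv : ContinuousOn (fun t ↦ ‖v t‖ ^ 2) (Icc 0 T) :=
    (hx.continuousOn_velocity.norm.pow 2).mono Icc_subset_Ici_self
  have h := sub_le_integral_of_hasDerivWithinAt_Ici
    (φ := fun t ↦ t * energy f x v w t + anchoredEnergy f r x v w t)
    (ψ := fun t ↦ ‖v t‖ ^ 2 / 2 - r * (t * ‖v t‖ ^ 2))
    (fun t ht ↦ ((hasDerivWithinAt_id t _).mul (hx.hasDerivWithinAt_energy hf w ht)).add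
      (hx.hasDerivWithinAt_anchoredEnergy hf hr.ne' w ht))
    (((hx.continuousOn_velocity.norm.pow 2).div_const 2).sub
      (continuousOn_const.mul (continuousOn_id.mul (hx.continuousOn_velocity.norm.pow 2))))
    (fun t _ ↦ by
      have := hconv.sub_le_inner_gradient (hf (x t)) w
      simp only [energy, id]
      linarith)
    le_rfl hT
  rw [intervalIntegral.integral_sub ((hv.intervalIntegrable_of_Icc hT).div_const 2)
      (((continuousOn_id.mul hv).intervalIntegrable_of_Icc hT :
        IntervalIntegrable (fun t ↦ t * ‖v t‖ ^ 2) volume 0 T).const_mul r),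
    intervalIntegral.integral_div, intervalIntegral.integral_const_mul] at h
  simp only [zero_mul, zero_add] at h
  have hE : energy f x v w 0 / (2 * r) = energy f x v w 0 / r / 2 := by ring
  linarith [hx.integral_norm_sq_le hf hr hw hT, anchoredEnergy_nonneg (x := x) (v := v) hr hw T]

theorem mul_energy_le (hx : IsHeavyBallTrajectory f r x v) (hf : Differentiable ℝ f)
    (hconv : ConvexOn ℝ univ f) (hr : 0 < r) {z : H} (hz : ∀ y, f z ≤ f y) {T : ℝ}
    (hT : 0 ≤ T) :
    T * energy f x v z T ≤ 3 / (2 * r) * (f (x 0) - f z)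
      + r * infDist (x 0) {w | ∀ y, f w ≤ f y} ^ 2 + 5 / (4 * r) * ‖v 0‖ ^ 2 := by
  suffices h : T * energy f x v z T ≤ 3 / (2 * r) * (f (x 0) - f z) + 5 / (4 * r) * ‖v 0‖ ^ 2
      + r * infDist (x 0) {w | ∀ y, f w ≤ f y} ^ 2 by linarith
  refine le_add_mul_infDist_sq ⟨z, hz⟩ hr.le fun w hw ↦ ?_
  have hfw : f w = f z := le_antisymm (hw z) (hz w)
  have hE : energy f x v w = energy f x v z := by unfold energy; rw [hfw]
  have hI : 0 ≤ ∫ t in 0..T, t * ‖v t‖ ^ 2 :=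
    intervalIntegral.integral_nonneg hT fun t ht ↦ mul_nonneg ht.1 (sq_nonneg _)
  calc T * energy f x v z T
      ≤ T * energy f x v w T + r * ∫ t in 0..T, t * ‖v t‖ ^ 2 := by
        rw [hE]; exact le_add_of_nonneg_right (mul_nonneg hr.le hI)
    _ ≤ anchoredEnergy f r x v w 0 + energy f x v w 0 / (2 * r) :=
        hx.mul_energy_add_integral_le hf hconv hr hw hT
    _ ≤ _ := by
        have := anchoredEnergy_add_energy_div_le (f := f) (x := x) (v := v) (w := w) hr 0
        rw [hfw] at this
        rw [dist_eq_norm]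
        linarith

theorem integrableOn_comp_position_sub (hx : IsHeavyBallTrajectory f r x v)
    (hf : Differentiable ℝ f) (hconv : ConvexOn ℝ univ f) (hr : 0 < r) (hw : ∀ y, f w ≤ f y) :
    IntegrableOn (fun t ↦ f (x t) - f w) (Ioi 0) :=
  integrableOn_Ioi_of_integral_le ((hx.continuousOn_comp_position hf).sub continuousOn_const)
    (fun t _ ↦ sub_nonneg.2 (hw (x t)))
    fun _ hT ↦ hx.integral_comp_position_sub_le_anchoredEnergy hf hconv hr hw hT

theorem integrableOn_norm_sq (hx : IsHeavyBallTrajectory f r x v) (hf : Differentiable ℝ f)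
    (hr : 0 < r) (hw : ∀ y, f w ≤ f y) : IntegrableOn (fun t ↦ ‖v t‖ ^ 2) (Ioi 0) :=
  integrableOn_Ioi_of_integral_le (hx.continuousOn_velocity.norm.pow 2) (fun _ _ ↦ sq_nonneg _)
    fun _ hT ↦ hx.integral_norm_sq_le hf hr hw hT

theorem integrableOn_mul_norm_sq (hx : IsHeavyBallTrajectory f r x v)
    (hf : Differentiable ℝ f) (hconv : ConvexOn ℝ univ f) (hr : 0 < r) (hw : ∀ y, f w ≤ f y) :
    IntegrableOn (fun t ↦ t * ‖v t‖ ^ 2) (Ioi 0) :=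
  integrableOn_Ioi_of_integral_le
    (K := (anchoredEnergy f r x v w 0 + energy f x v w 0 / (2 * r)) / r)
    (continuousOn_id.mul (hx.continuousOn_velocity.norm.pow 2))
    (fun t ht ↦ mul_nonneg ht (sq_nonneg _)) fun T hT ↦ by
      rw [le_div_iff₀' hr]
      linarith [hx.mul_energy_add_integral_le hf hconv hr hw hT,
        mul_nonneg hT (energy_nonneg (x := x) (v := v) hw T)]

theorem integrableOn_energy (hx : IsHeavyBallTrajectory f r x v) (hf : Differentiable ℝ f)
    (hconv : ConvexOn ℝ univ f) (hr : 0 < r) (hw : ∀ y, f w ≤ f y) :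
    IntegrableOn (energy f x v w) (Ioi 0) :=
  (hx.integrableOn_comp_position_sub hf hconv hr hw).add
    ((hx.integrableOn_norm_sq hf hr hw).div_const 2)

theorem tendsto_mul_energy (hx : IsHeavyBallTrajectory f r x v) (hf : Differentiable ℝ f)
    (hconv : ConvexOn ℝ univ f) (hr : 0 < r) (hw : ∀ y, f w ≤ f y) :
    Tendsto (fun t ↦ t * energy f x v w t) atTop (𝓝 0) := by
  have hderiv : ∀ t ∈ Ioi (0 : ℝ), HasDerivAt (fun t ↦ t * energy f x v w t)
      (energy f x v w t - r * (t * ‖v t‖ ^ 2)) t := fun t ht ↦ by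
    refine ((hasDerivAt_id' t).mul ((hx.hasDerivWithinAt_energy hf w
      (mem_Ici.2 ht.le)).hasDerivAt (Ici_mem_nhds ht))).congr_deriv ?_
    ring
  have hlim := tendsto_limUnder_of_hasDerivAt_of_integrableOn_Ioi hderiv
    ((hx.integrableOn_energy hf hconv hr hw).sub
      ((hx.integrableOn_mul_norm_sq hf hconv hr hw).const_mul r))
  rwa [eq_zero_of_tendsto_mul_of_integrableOn_Ioi (hx.integrableOn_energy hf hconv hr hw)
    hlim] at hlim

end IsHeavyBallTrajectory

end HeavyBall

theorem hbf_convergence_rates_general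
    {H : Type*} [NormedAddCommGroup H] [InnerProductSpace ℝ H] [CompleteSpace H]
    (f : H → ℝ) (hf : ContDiff ℝ 1 f) (hconv : ConvexOn ℝ Set.univ f)
    (r : ℝ) (hr : 0 < r)
    (z : H) (hz : ∀ y, f z ≤ f y)
    (x x' x'' : ℝ → H)
    (hx : ∀ t ∈ Set.Ici (0:ℝ), HasDerivWithinAt x (x' t) (Set.Ici 0) t)
    (hx' : ∀ t ∈ Set.Ici (0:ℝ), HasDerivWithinAt x' (x'' t) (Set.Ici 0) t)
    (heq : ∀ t ∈ Set.Ici (0:ℝ), x'' t + r • x' t + gradient f (x t) = 0)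
    (x₀ x₁ : H) (hx0 : x 0 = x₀) (hx1 : x' 0 = x₁)
    (C : ℝ)
    (hC : C = (3 / (2 * r)) * (f x₀ - f z)
        + r * (Metric.infDist x₀ {w : H | ∀ y, f w ≤ f y}) ^ 2
        + (5 / (4 * r)) * ‖x₁‖ ^ 2) :
    (MeasureTheory.IntegrableOn (fun t => f (x t) - f z) (Set.Ioi 0) ∧
        MeasureTheory.IntegrableOn (fun t => t * ‖x' t‖ ^ 2) (Set.Ioi 0)) ∧
    (∀ t : ℝ, 0 < t →
        f (x t) - f z ≤ C / t ∧ ‖x' t‖ ≤ Real.sqrt (2 * C) / Real.sqrt t) ∧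
    (Tendsto (fun t => t * (f (x t) - f z)) atTop (𝓝 0) ∧
        Tendsto (fun t => Real.sqrt t * ‖x' t‖) atTop (𝓝 0)) := by
  have hfd : Differentiable ℝ f := hf.differentiable one_ne_zero
  have htraj : IsHeavyBallTrajectory f r x x' := ⟨hx, fun t ht ↦ (hx' t ht).congr_deriv
    (eq_neg_of_add_eq_zero_left ((add_assoc _ _ _).symm.trans (heq t ht)))⟩
  subst hx0 hx1 hC
  have hg : ∀ t, 0 ≤ f (x t) - f z := fun t ↦ sub_nonneg.2 (hz (x t))
  refine ⟨⟨htraj.integrableOn_comp_position_sub hfd hconv hr hz,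
      htraj.integrableOn_mul_norm_sq hfd hconv hr hz⟩,
    fun t ht ↦ le_div_and_le_sqrt_div_of_mul_add_sq_le ht (hg t)
      (htraj.mul_energy_le hfd hconv hr hz ht.le),
    tendsto_mul_and_sqrt_mul_of_tendsto_mul_add_sq hg (fun t ↦ norm_nonneg _)
      (htraj.tendsto_mul_energy hfd hconv hr hz)⟩

/-- **Heavy Ball with Friction: convergence rates (Theorem 2.1).**
If `f` is a convex `C¹` function on a real Hilbert space with a minimizer `z`,
and `x` is a `C²` solution on `[0,∞)` of `ẍ + r ẋ + ∇f(x) = 0` with `x(0) = x₀`,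
`ẋ(0) = x₁`, then the values and the velocity satisfy the integral estimates (i),
the pointwise rates (ii) with constant `C(x₀,x₁)`, and the `o`-rates (iii). -/
theorem hbf_convergence_rates
    {H : Type*} [NormedAddCommGroup H] [InnerProductSpace ℝ H] [CompleteSpace H]
    (f : H → ℝ) (hf : ContDiff ℝ 1 f) (hconv : ConvexOn ℝ Set.univ f)
    (r : ℝ) (hr : 0 < r)
    (z : H) (hz : ∀ y, f z ≤ f y)
    (x x' x'' : ℝ → H)
    (hx : ∀ t ∈ Set.Ici (0:ℝ), HasDerivWithinAt x (x' t) (Set.Ici 0) t)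
    (hx' : ∀ t ∈ Set.Ici (0:ℝ), HasDerivWithinAt x' (x'' t) (Set.Ici 0) t)
    (hx''c : ContinuousOn x'' (Set.Ici 0))
    (heq : ∀ t ∈ Set.Ici (0:ℝ), x'' t + r • x' t + gradient f (x t) = 0)
    (x₀ x₁ : H) (hx0 : x 0 = x₀) (hx1 : x' 0 = x₁)
    (C : ℝ)
    (hC : C = (3 / (2 * r)) * (f x₀ - f z)
        + r * (Metric.infDist x₀ {w : H | ∀ y, f w ≤ f y}) ^ 2
        + (5 / (4 * r)) * ‖x₁‖ ^ 2) :
    (MeasureTheory.IntegrableOn (fun t => f (x t) - f z) (Set.Ioi 0) ∧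
        MeasureTheory.IntegrableOn (fun t => t * ‖x' t‖ ^ 2) (Set.Ioi 0)) ∧
    (∀ t : ℝ, 0 < t →
        f (x t) - f z ≤ C / t ∧ ‖x' t‖ ≤ Real.sqrt (2 * C) / Real.sqrt t) ∧
    (Tendsto (fun t => t * (f (x t) - f z)) atTop (𝓝 0) ∧
        Tendsto (fun t => Real.sqrt t * ‖x' t‖) atTop (𝓝 0)) :=
  hbf_convergence_rates_general f hf hconv r hr z hz x x' x'' hx hx' heq x₀ x₁ hx0 hx1 C hC
end

section
/- Let H be a real Hilbert space and let f : H → ℝ be of class C¹ and μ-strongly convex for some μ > 0, with unique minimizer x*. Let x : [0,∞) → H be twice continuously differentiable and satisfy ẍ(t) + 2√μ ẋ(t) + ∇f(x(t)) = 0 for all t ≥ 0, with x(0) = x₀ and ẋ(0) = x₁. Then for all t ≥ 0, f(x(t)) − f(x*) ≤ C e^{−√μ t}, where C := f(x₀) − f(x*) + μ‖x₀ − x*‖² + ‖x₁‖². -/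
open Set
open scoped RealInnerProductSpace

noncomputable section

/-!
With `r = √μ`, the energy `E = f(x) - f(x*) + ½‖ẋ + r (x - x*)‖²` satisfies `E' + r E ≤ 0`
along the trajectory: after substituting the equation of motion, `E' + r E` equals
`-(r/2)‖ẋ‖²` plus `r` times the defect of the strong-convexity inequality
`f(x*) ≥ f(x) + ⟪∇f(x), x* - x⟫ + (μ/2)‖x* - x‖²`. Hence `E(t) e^{rt}` is nonincreasing, and
`f(x(t)) - f(x*) ≤ E(t) ≤ E(0) e^{-rt}` with `E(0) ≤ C` since `½‖a + b‖² ≤ ‖a‖² + ‖b‖²`.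
-/

section FirstOrder

variable {E : Type*} [NormedAddCommGroup E] [NormedSpace ℝ E]

theorem ConvexOn.add_le_of_hasFDerivAt {g : E → ℝ} {g' : E →L[ℝ] ℝ} {a : E}
    (hg : ConvexOn ℝ univ g) (hg' : HasFDerivAt g g' a) (b : E) : g a + g' (b - a) ≤ g b := by
  have hline : ConvexOn ℝ univ (fun s : ℝ => g (a + s • (b - a))) := by
    have hcomp := hg.comp_affineMap (AffineMap.lineMap a b)
    rw [show AffineMap.lineMap a b ⁻¹' univ = univ from preimage_univ] at hcomp
    simpa only [Function.comp_def, AffineMap.lineMap_apply_module', add_comm] using hcomp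
  have hpath : HasDerivAt (fun s : ℝ => a + s • (b - a)) (b - a) 0 := by
    simpa using ((hasDerivAt_id (0 : ℝ)).smul_const (b - a)).const_add a
  have hg0 : HasFDerivAt g g' (a + (0 : ℝ) • (b - a)) := by simpa using hg'
  have h := hline.le_slope_of_hasDerivAt (mem_univ 0) (mem_univ 1) one_pos
    (hg0.comp_hasDerivAt 0 hpath)
  simp only [slope_def_field, zero_smul, add_zero, one_smul, add_sub_cancel, sub_zero, div_one] at h
  linarith

end FirstOrder

section HeavyBall

variable {H : Type*} [NormedAddCommGroup H] [InnerProductSpace ℝ H]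

theorem add_le_of_convexOn_sub_sq_norm {f : H → ℝ} {f' : H →L[ℝ] ℝ} {μ : ℝ} {a : H}
    (hsc : ConvexOn ℝ univ (fun y => f y - μ / 2 * ‖y‖ ^ 2)) (hf : HasFDerivAt f f' a)
    (b : H) : f a + f' (b - a) + μ / 2 * ‖b - a‖ ^ 2 ≤ f b := by
  have h := hsc.add_le_of_hasFDerivAt (hf.sub ((hasStrictFDerivAt_norm_sq a).hasFDerivAt.const_mul
    (μ / 2))) b
  have hnorm : ‖b‖ ^ 2 = ‖a‖ ^ 2 + 2 * ⟪a, b - a⟫ + ‖b - a‖ ^ 2 := by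
    rw [← norm_add_sq_real, add_sub_cancel]
  simp only [sub_apply, smul_apply, innerSL_apply_apply, smul_eq_mul, nsmul_eq_mul,
    Nat.cast_ofNat] at h
  rw [hnorm] at h
  linarith

def heavyBallEnergy (f : H → ℝ) (xstar : H) (r : ℝ) (x v : H) : ℝ :=
  f x - f xstar + ‖v + r • (x - xstar)‖ ^ 2 / 2

variable {f : H → ℝ} {xstar : H} {r : ℝ}

theorem sub_le_heavyBallEnergy (x v : H) : f x - f xstar ≤ heavyBallEnergy f xstar r x v := by
  unfold heavyBallEnergy
  linarith [sq_nonneg ‖v + r • (x - xstar)‖]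

theorem heavyBallEnergy_le (x v : H) :
    heavyBallEnergy f xstar r x v ≤ f x - f xstar + r ^ 2 * ‖x - xstar‖ ^ 2 + ‖v‖ ^ 2 := by
  have hsq : ‖v + r • (x - xstar)‖ ^ 2 ≤ 2 * (‖v‖ ^ 2 + ‖r • (x - xstar)‖ ^ 2) :=
    (pow_le_pow_left₀ (norm_nonneg _) (norm_add_le _ _) 2).trans add_sq_le
  rw [norm_smul, mul_pow, Real.norm_eq_abs, sq_abs] at hsq
  unfold heavyBallEnergy
  linarith

theorem HasDerivWithinAt.heavyBallEnergy {f' : H →L[ℝ] ℝ} {x v : ℝ → H} {x' v' : H}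
    {s : Set ℝ} {t : ℝ} (hf : HasFDerivAt f f' (x t)) (hx : HasDerivWithinAt x x' s t)
    (hv : HasDerivWithinAt v v' s t) :
    HasDerivWithinAt (fun t => heavyBallEnergy f xstar r (x t) (v t))
      (f' x' + ⟪v t + r • (x t - xstar), v' + r • x'⟫) s t := by
  have hw : HasDerivWithinAt (fun t => v t + r • (x t - xstar)) (v' + r • x') s t :=
    hv.add ((hx.sub_const xstar).const_smul r)
  exact (((hf.comp_hasDerivWithinAt t hx).sub_const (f xstar)).add
    (hw.norm_sq.div_const 2)).congr_deriv (by ring)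

theorem heavyBallEnergy_dissipation (hr : 0 ≤ r) {x v a g : H}
    (hode : a + (2 * r) • v + g = 0)
    (hconv : f x + ⟪g, xstar - x⟫ + r ^ 2 / 2 * ‖xstar - x‖ ^ 2 ≤ f xstar) :
    ⟪g, v⟫ + ⟪v + r • (x - xstar), a + r • v⟫ + r * heavyBallEnergy f xstar r x v ≤ 0 := by
  have ha : a + r • v = -(r • v) - g := by
    rw [← sub_eq_zero, ← hode]
    module
  rw [← neg_sub x xstar, inner_neg_right, norm_neg] at hconv
  have hdefect := mul_le_mul_of_nonneg_left hconv hr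
  have hv := mul_nonneg hr (sq_nonneg ‖v‖)
  unfold heavyBallEnergy
  rw [ha, norm_add_sq_real]
  generalize x - xstar = w at *
  simp only [inner_add_left, inner_sub_right, inner_neg_right, real_inner_smul_left,
    real_inner_smul_right, norm_smul, Real.norm_eq_abs, mul_pow, sq_abs, real_inner_self_eq_norm_sq,
    real_inner_comm v g, real_inner_comm g w, real_inner_comm v w]
  linarith

end HeavyBall

theorem le_mul_exp_of_hasDerivWithinAt_add_mul_nonpos {u u' : ℝ → ℝ} {r a : ℝ}
    (hu : ∀ t ∈ Ici a, HasDerivWithinAt u (u' t) (Ici a) t)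
    (hdecay : ∀ t ∈ Ici a, u' t + r * u t ≤ 0) {t : ℝ} (ht : a ≤ t) :
    u t ≤ u a * Real.exp (-r * (t - a)) := by
  have hw : ∀ s ∈ Ici a, HasDerivWithinAt (fun s => u s * Real.exp (r * s))
      (u' s * Real.exp (r * s) + u s * (Real.exp (r * s) * r)) (Ici a) s := fun s hs =>
    (hu s hs).mul (by simpa using ((hasDerivAt_id s).const_mul r).exp.hasDerivWithinAt)
  have hanti : AntitoneOn (fun s => u s * Real.exp (r * s)) (Ici a) := by
    refine antitoneOn_of_hasDerivWithinAt_nonpos (convex_Ici a)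
      (f' := fun s => u' s * Real.exp (r * s) + u s * (Real.exp (r * s) * r))
      (fun s hs => (hw s hs).continuousWithinAt) (fun s hs => ?_) (fun s hs => ?_)
    · rw [interior_Ici] at hs ⊢
      exact (hw s (Ioi_subset_Ici_self hs)).mono Ioi_subset_Ici_self
    · rw [interior_Ici] at hs
      nlinarith [hdecay s (Ioi_subset_Ici_self hs), Real.exp_pos (r * s)]
  have h := hanti self_mem_Ici ht ht
  rw [← le_div_iff₀ (Real.exp_pos _), mul_div_assoc, ← Real.exp_sub] at h
  rwa [show -r * (t - a) = r * a - r * t by ring]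

theorem hbf_strongly_convex_exponential_rate_general
    {H : Type*} [NormedAddCommGroup H] [InnerProductSpace ℝ H] [CompleteSpace H]
    (f : H → ℝ) (hf : ContDiff ℝ 1 f)
    (μ : ℝ) (hμ : 0 < μ)
    (hsc : ConvexOn ℝ Set.univ (fun y => f y - μ / 2 * ‖y‖ ^ 2))
    (xstar : H)
    (x x' x'' : ℝ → H)
    (hx : ∀ t ∈ Set.Ici (0:ℝ), HasDerivWithinAt x (x' t) (Set.Ici 0) t)
    (hx' : ∀ t ∈ Set.Ici (0:ℝ), HasDerivWithinAt x' (x'' t) (Set.Ici 0) t)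
    (heq : ∀ t ∈ Set.Ici (0:ℝ),
        x'' t + (2 * Real.sqrt μ) • x' t + gradient f (x t) = 0)
    (x₀ x₁ : H) (hx0 : x 0 = x₀) (hx1 : x' 0 = x₁)
    (C : ℝ) (hC : C = f x₀ - f xstar + μ * ‖x₀ - xstar‖ ^ 2 + ‖x₁‖ ^ 2) :
    ∀ t ∈ Set.Ici (0:ℝ), f (x t) - f xstar ≤ C * Real.exp (-(Real.sqrt μ) * t) := by
  intro t ht
  set r := Real.sqrt μ
  have hr2 : r ^ 2 = μ := Real.sq_sqrt hμ.le
  have hgrad (y : H) : HasFDerivAt f (InnerProductSpace.toDual ℝ H (gradient f y)) y :=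
    ((hf.differentiable one_ne_zero) y).hasGradientAt.hasFDerivAt
  have hE (s : ℝ) (hs : s ∈ Ici 0) := (hx s hs).heavyBallEnergy (xstar := xstar) (r := r)
    (hgrad (x s)) (hx' s hs)
  have hdecay : ∀ s ∈ Ici (0 : ℝ), ⟪gradient f (x s), x' s⟫
      + ⟪x' s + r • (x s - xstar), x'' s + r • x' s⟫
      + r * heavyBallEnergy f xstar r (x s) (x' s) ≤ 0 := fun s hs => by
    refine heavyBallEnergy_dissipation (Real.sqrt_nonneg μ) (heq s hs) ?_
    simpa only [InnerProductSpace.toDual_apply_apply, Real.sq_sqrt hμ.le] using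
      add_le_of_convexOn_sub_sq_norm hsc (hgrad (x s)) xstar
  calc f (x t) - f xstar ≤ heavyBallEnergy f xstar r (x t) (x' t) := sub_le_heavyBallEnergy _ _
    _ ≤ heavyBallEnergy f xstar r (x 0) (x' 0) * Real.exp (-r * (t - 0)) :=
      le_mul_exp_of_hasDerivWithinAt_add_mul_nonpos hE hdecay ht
    _ ≤ C * Real.exp (-r * t) := by
      rw [sub_zero, hC, ← hx0, ← hx1, ← hr2]
      gcongr
      exact heavyBallEnergy_le _ _

/-- **Heavy ball with friction, strongly convex case (Theorem 2.2).**
If `f` is `C¹` and `μ`-strongly convex (i.e. `f - (μ/2)‖·‖²` is convex), with unique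
minimizer `x*`, and `x` is a `C²` solution of `ẍ + 2√μ ẋ + ∇f(x) = 0` on `[0,∞)` with
`x(0)=x₀`, `ẋ(0)=x₁`, then `f(x(t)) - f(x*) ≤ C e^{-√μ t}` where
`C = f(x₀) - f(x*) + μ‖x₀ - x*‖² + ‖x₁‖²`. -/
theorem hbf_strongly_convex_exponential_rate
    {H : Type*} [NormedAddCommGroup H] [InnerProductSpace ℝ H] [CompleteSpace H]
    (f : H → ℝ) (hf : ContDiff ℝ 1 f)
    (μ : ℝ) (hμ : 0 < μ)
    (hsc : ConvexOn ℝ Set.univ (fun y => f y - μ / 2 * ‖y‖ ^ 2))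
    (xstar : H) (hxstar : ∀ y, f xstar ≤ f y)
    (x x' x'' : ℝ → H)
    (hx : ∀ t ∈ Set.Ici (0:ℝ), HasDerivWithinAt x (x' t) (Set.Ici 0) t)
    (hx' : ∀ t ∈ Set.Ici (0:ℝ), HasDerivWithinAt x' (x'' t) (Set.Ici 0) t)
    (hx''c : ContinuousOn x'' (Set.Ici 0))
    (heq : ∀ t ∈ Set.Ici (0:ℝ),
        x'' t + (2 * Real.sqrt μ) • x' t + gradient f (x t) = 0)
    (x₀ x₁ : H) (hx0 : x 0 = x₀) (hx1 : x' 0 = x₁)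
    (C : ℝ) (hC : C = f x₀ - f xstar + μ * ‖x₀ - xstar‖ ^ 2 + ‖x₁‖ ^ 2) :
    ∀ t ∈ Set.Ici (0:ℝ), f (x t) - f xstar ≤ C * Real.exp (-(Real.sqrt μ) * t) :=
  hbf_strongly_convex_exponential_rate_general f hf μ hμ hsc xstar x x' x'' hx hx' heq x₀ x₁ hx0 hx1
    C hC
end
end

section
/- Let H be a real Hilbert space, let f : H → ℝ be differentiable with ∇f Lipschitz continuous on every bounded subset of H and inf_H f > −∞, let φ : H → [0,∞) be a damping potential, and let x : [0,∞) → H be a strong global solution of the differential inclusion 0 ∈ ẍ(t) + ∂φ(ẋ(t)) + ∇f(x(t)). Then: (i) the global energy t ↦ f(x(t)) − inf_H f + (1/2)‖ẋ(t)‖² is nonincreasing on [0,∞); (ii) sup_{t≥0} ‖ẋ(t)‖ < ∞ and ∫₀^∞ φ(ẋ(t)) dt < ∞; (iii) if moreover the trajectory x is bounded, then ẋ is Lipschitz continuous on [0,∞) (equivalently, the acceleration ẍ is essentially bounded on [0,∞)); (iv) if in addition there exist p ≥ 1 and r > 0 with φ(u) ≥ r‖u‖^p for all u ∈ H, then ‖ẋ(t)‖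 → 0 as t → ∞. -/
/-!
Along a solution, at almost every time the global energy `E` has derivative
`⟪∇f(x), ẋ⟫ + ⟪ẋ, ẍ⟫ = -⟪ξ, ẋ⟫ ≤ -φ(ẋ)` for some `ξ ∈ ∂φ(ẋ)`, because `φ(0) = 0`. Since `E` is
absolutely continuous (it is Lipschitz on bounded intervals), integration gives
`E(t) + ∫ₛᵗ φ(ẋ) ≤ E(s)`, which yields (i), the bound `½‖ẋ‖² ≤ E(0)` and `∫₀^∞ φ(ẋ) ≤ E(0)`.
If the trajectory is bounded, then `∇f(x)` and the subgradients of `φ` at the bounded velocities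
are bounded, hence so is `ẍ = -ξ - ∇f(x)`, and `ẋ` is Lipschitz. Then `φ(ẋ)` is integrable and
uniformly continuous on `[0, ∞)`, so it tends to `0` (Barbalat), and so does `r‖ẋ‖ᵖ ≤ φ(ẋ)`.
-/

open Set Filter Topology MeasureTheory Metric Bornology
open scoped RealInnerProductSpace NNReal

noncomputable section

variable {H : Type*} [NormedAddCommGroup H] [InnerProductSpace ℝ H] [CompleteSpace H]

/-- The convex subdifferential of `φ` at `u`. -/
def subdiff (φ : H → ℝ) (u : H) : Set H :=
  {ξ : H | ∀ v : H, φ u + ⟪ξ, v - u⟫ ≤ φ v}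

/-- A damping potential: a nonnegative convex continuous function vanishing (and
minimal) at the origin, whose minimal section of the subdifferential is bounded on
bounded sets (expressed through the existence of subgradients of uniformly bounded
norm). -/
structure IsDampingPotential (φ : H → ℝ) : Prop where
  nonneg : ∀ u, 0 ≤ φ u
  convexOn : ConvexOn ℝ Set.univ φ
  continuous : Continuous φ
  map_zero : φ 0 = 0
  minimalSectionBounded : ∀ R : ℝ, 0 < R →
    ∃ M : ℝ, ∀ u : H, ‖u‖ ≤ R → ∃ ξ ∈ subdiff φ u, ‖ξ‖ ≤ M

/-- A strong global solution of the differential inclusion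
`0 ∈ ẍ(t) + ∂φ(ẋ(t)) + ∇f(x(t))` on `[0,∞)`: `x` is `C¹` on `[0,∞)` with derivative
`x'`, `x'` is Lipschitz continuous on bounded intervals, and for almost every `t > 0`
the acceleration exists and the inclusion holds. -/
structure IsStrongSolutionV (f φ : H → ℝ) (x x' : ℝ → H) : Prop where
  hasDeriv : ∀ t ∈ Set.Ici (0:ℝ), HasDerivWithinAt x (x' t) (Set.Ici 0) t
  contDeriv : ContinuousOn x' (Set.Ici 0)
  lipDeriv : ∀ T : ℝ, 0 < T → ∃ K : ℝ≥0, LipschitzOnWith K x' (Set.Icc 0 T)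
  inclusion : ∀ᵐ t ∂(volume : Measure ℝ), t ∈ Set.Ioi (0:ℝ) →
    ∃ a : H, HasDerivAt x' a t ∧
      ∃ ξ ∈ subdiff φ (x' t), a + ξ + gradient f (x t) = 0

theorem AbsolutelyContinuousOnInterval.sub_le_integral_of_ae_hasDerivAt_le {g m : ℝ → ℝ}
    {a b : ℝ} (hab : a ≤ b) (hg : AbsolutelyContinuousOnInterval g a b)
    (hm : IntervalIntegrable m volume a b)
    (h : ∀ᵐ t, t ∈ Ioo a b → ∃ g', HasDerivAt g g' t ∧ g' ≤ m t) :
    g b - g a ≤ ∫ t in a..b, m t := by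
  rw [← hg.integral_deriv_eq_sub]
  refine intervalIntegral.integral_mono_ae_restrict hab hg.intervalIntegrable_deriv hm ?_
  rw [← Measure.restrict_congr_set Ioo_ae_eq_Icc, EventuallyLE,
    ae_restrict_iff' measurableSet_Ioo]
  filter_upwards [h] with t ht hmem
  obtain ⟨g', hg', hle⟩ := ht hmem
  rwa [hg'.deriv]

theorem LipschitzOnWith.norm_sub_le_of_ae_hasDerivAt_norm_le {E : Type*}
    [NormedAddCommGroup E] [NormedSpace ℝ E] {g : ℝ → E} {K : ℝ≥0} {a b C : ℝ}
    (hab : a ≤ b) (hg : LipschitzOnWith K g (Icc a b))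
    (h : ∀ᵐ t, t ∈ Ioo a b → ∃ g', HasDerivAt g g' t ∧ ‖g'‖ ≤ C) :
    ‖g b - g a‖ ≤ C * (b - a) := by
  obtain ⟨ℓ, hℓ, hℓw⟩ := exists_dual_vector'' ℝ (g b - g a)
  have hac : AbsolutelyContinuousOnInterval (fun t => ℓ (g t)) a b :=
    (ℓ.lipschitz.comp_lipschitzOnWith (uIcc_of_le hab ▸ hg)).absolutelyContinuousOnInterval
  have := hac.sub_le_integral_of_ae_hasDerivAt_le (m := fun _ => C) hab intervalIntegrable_const ?_
  · rwa [← map_sub, hℓw, intervalIntegral.integral_const, smul_eq_mul, mul_comm] at this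
  filter_upwards [h] with t ht hmem
  obtain ⟨g', hg', hle⟩ := ht hmem
  exact ⟨ℓ g', ℓ.hasFDerivAt.comp_hasDerivAt t hg',
    (le_abs_self _).trans ((ℓ.le_opNorm g').trans
      ((mul_le_of_le_one_left (norm_nonneg _) hℓ).trans hle))⟩

theorem lipschitzOnWith_Ici_of_ae_hasDerivAt_norm_le {E : Type*}
    [NormedAddCommGroup E] [NormedSpace ℝ E] {g : ℝ → E} {a : ℝ} {C : ℝ≥0}
    (hg : ∀ T, a < T → ∃ K, LipschitzOnWith K g (Icc a T))
    (h : ∀ᵐ t, a < t → ∃ g', HasDerivAt g g' t ∧ ‖g'‖ ≤ C) :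
    LipschitzOnWith C g (Ici a) := by
  have hseg : ∀ s t, a ≤ s → s ≤ t → ‖g t - g s‖ ≤ C * (t - s) := by
    intro s t hs hst
    rcases hst.eq_or_lt with rfl | hlt
    · simp
    obtain ⟨K, hK⟩ := hg t (hs.trans_lt hlt)
    refine (hK.mono (Icc_subset_Icc_left hs)).norm_sub_le_of_ae_hasDerivAt_norm_le hst ?_
    filter_upwards [h] with τ hτ hmem using hτ (hs.trans_lt hmem.1)
  refine LipschitzOnWith.of_dist_le_mul fun s hs t ht => ?_
  rcases le_total s t with hst | hts
  · rw [dist_comm, dist_eq_norm, Real.dist_eq, abs_sub_comm, abs_of_nonneg (sub_nonneg.2 hst)]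
    exact hseg s t hs hst
  · rw [dist_eq_norm, Real.dist_eq, abs_of_nonneg (sub_nonneg.2 hts)]
    exact hseg t s ht hts

theorem LipschitzOnWith.isBounded_image {α β : Type*} [PseudoMetricSpace α]
    [PseudoMetricSpace β] {g : α → β} {K : ℝ≥0} {s : Set α}
    (hg : LipschitzOnWith K g s) (hs : IsBounded s) : IsBounded (g '' s) :=
  isBounded_image_iff.2 ⟨K * diam s, fun x hx y hy =>
    (hg.dist_le_mul x hx y hy).trans (mul_le_mul_of_nonneg_left (dist_le_diam_of_mem hs hx hy) K.2)⟩

theorem IntegrableOn.tendsto_intervalIntegral_add_atTop {h : ℝ → ℝ} {a : ℝ}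
    (hi : IntegrableOn h (Ioi a)) (c : ℝ) :
    Tendsto (fun T => ∫ t in T..T + c, h t) atTop (𝓝 0) := by
  have hint : ∀ b ≥ a, IntervalIntegrable h volume a b := fun b hb =>
    (intervalIntegrable_iff_integrableOn_Ioc_of_le hb).2 (hi.mono_set Ioc_subset_Ioi_self)
  have hF := intervalIntegral_tendsto_integral_Ioi a hi tendsto_id
  have hF' := intervalIntegral_tendsto_integral_Ioi a hi
    (tendsto_atTop_add_const_right _ c tendsto_id)
  rw [← sub_self (∫ t in Ioi a, h t)]
  refine (hF'.sub hF).congr' ?_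
  filter_upwards [eventually_ge_atTop a, eventually_ge_atTop (a - c)] with T hT hTc
  exact intervalIntegral.integral_interval_sub_left (hint _ (by simp only [id]; linarith))
    (hint T hT)

theorem tendsto_zero_of_uniformContinuousOn_of_integrableOn {E : Type*} [NormedAddCommGroup E]
    {h : ℝ → E} {a : ℝ} (hu : UniformContinuousOn h (Ici a)) (hi : IntegrableOn h (Ioi a)) :
    Tendsto h atTop (𝓝 0) := by
  rw [Metric.tendsto_atTop]
  intro ε hε
  obtain ⟨δ, hδ, hclose⟩ := Metric.uniformContinuousOn_iff.1 hu (ε / 2) (half_pos hε)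
  obtain ⟨N, hN⟩ := eventually_atTop.1
    (((IntegrableOn.tendsto_intervalIntegral_add_atTop (h := fun t => ‖h t‖) hi.norm
      (δ / 2)).eventually_lt_const (by positivity : (0:ℝ) < δ / 2 * (ε / 2))).and
      (eventually_ge_atTop a))
  refine ⟨N, fun T hT => ?_⟩
  obtain ⟨hsmall, haT⟩ := hN T hT
  rw [dist_zero_right]
  by_contra! hbig
  have hlow : ∀ t ∈ Icc T (T + δ / 2), ε / 2 ≤ ‖h t‖ := by
    intro t ht
    have hdist : dist t T < δ := by
      rw [Real.dist_eq, abs_of_nonneg (by linarith [ht.1])]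
      linarith [ht.2]
    have := hclose t (haT.trans ht.1) T haT hdist
    rw [dist_eq_norm] at this
    linarith [norm_sub_norm_le (h T) (h t), norm_sub_rev (h t) (h T)]
  have hint : IntervalIntegrable (fun t => ‖h t‖) volume T (T + δ / 2) :=
    (intervalIntegrable_iff_integrableOn_Ioc_of_le (by linarith)).2
      (IntegrableOn.mono_set hi.norm fun t ht => haT.trans_lt ht.1)
  have := intervalIntegral.integral_mono_on (by linarith) intervalIntegrable_const hint hlow
  rw [intervalIntegral.integral_const, smul_eq_mul, add_sub_cancel_left] at this
  linarith

section Subdifferential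

variable {E : Type*} [NormedAddCommGroup E] [InnerProductSpace ℝ E] {φ : E → ℝ} {u ξ : E}

theorem sub_le_inner_of_mem_subdiff (hξ : ξ ∈ subdiff φ u) : φ u - φ 0 ≤ ⟪ξ, u⟫ := by
  have := hξ 0
  rw [zero_sub, inner_neg_right] at this
  linarith

theorem norm_le_of_mem_subdiff (hξ : ξ ∈ subdiff φ u) : ‖ξ‖ ≤ φ (u + ‖ξ‖⁻¹ • ξ) - φ u := by
  have := hξ (u + ‖ξ‖⁻¹ • ξ)
  rw [add_sub_cancel_left, real_inner_smul_right, real_inner_self_eq_norm_sq] at this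
  rcases eq_or_ne ‖ξ‖ 0 with h | h
  · simp [h]
  · rw [sq, inv_mul_cancel_left₀ h] at this
    linarith

theorem IsDampingPotential.exists_bound (hφ : IsDampingPotential φ) (R : ℝ) :
    ∃ B, ∀ u, ‖u‖ ≤ R → φ u ≤ B := by
  obtain ⟨M, hM⟩ := hφ.minimalSectionBounded (max R 1) (by positivity)
  refine ⟨M * max R 1, fun u hu => ?_⟩
  have huR : ‖u‖ ≤ max R 1 := hu.trans (le_max_left _ _)
  obtain ⟨ξ, hξ, hξM⟩ := hM u huR
  calc φ u = φ u - φ 0 := by rw [hφ.map_zero, sub_zero]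
    _ ≤ ⟪ξ, u⟫ := sub_le_inner_of_mem_subdiff hξ
    _ ≤ ‖ξ‖ * ‖u‖ := real_inner_le_norm _ _
    _ ≤ M * max R 1 := mul_le_mul hξM huR (norm_nonneg _) ((norm_nonneg _).trans hξM)

theorem IsDampingPotential.exists_norm_subdiff_le (hφ : IsDampingPotential φ) (R : ℝ) :
    ∃ C, ∀ u ξ, ‖u‖ ≤ R → ξ ∈ subdiff φ u → ‖ξ‖ ≤ C := by
  obtain ⟨B, hB⟩ := hφ.exists_bound (R + 1)
  refine ⟨B, fun u ξ hu hξ => (norm_le_of_mem_subdiff hξ).trans ?_⟩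
  have hunit : ‖‖ξ‖⁻¹ • ξ‖ ≤ 1 := by
    rw [norm_smul, norm_inv, norm_norm]
    exact inv_mul_le_one_of_le₀ le_rfl (norm_nonneg _)
  linarith [hB _ ((norm_add_le _ _).trans (add_le_add hu hunit)), hφ.nonneg u]

theorem IsDampingPotential.exists_lipschitzOnWith (hφ : IsDampingPotential φ) (R : ℝ) :
    ∃ K, LipschitzOnWith K φ (closedBall 0 R) := by
  obtain ⟨M, hM⟩ := hφ.minimalSectionBounded (max R 1) (by positivity)
  refine ⟨M.toNNReal, LipschitzOnWith.of_le_add_mul _ fun u hu v _ => ?_⟩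
  rw [mem_closedBall_zero_iff] at hu
  obtain ⟨ξ, hξ, hξM⟩ := hM u (hu.trans (le_max_left _ _))
  have hinner : -⟪ξ, v - u⟫ ≤ ‖ξ‖ * ‖v - u‖ :=
    (neg_le_abs _).trans (abs_real_inner_le_norm _ _)
  have hM' : ‖ξ‖ * ‖v - u‖ ≤ M.toNNReal * dist u v := by
    rw [dist_comm, dist_eq_norm]
    exact mul_le_mul_of_nonneg_right (hξM.trans (Real.le_coe_toNNReal M)) (norm_nonneg _)
  linarith [hξ v]

end Subdifferential

section GlobalEnergy

variable {E : Type*} [NormedAddCommGroup E]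

def globalEnergy (f : E → ℝ) (x x' : ℝ → E) (t : ℝ) : ℝ :=
  f (x t) - sInf (Set.range f) + (1/2) * ‖x' t‖ ^ 2

theorem half_sq_norm_le_globalEnergy {f : E → ℝ} (hf : BddBelow (range f)) (x x' : ℝ → E)
    (t : ℝ) : 1/2 * ‖x' t‖ ^ 2 ≤ globalEnergy f x x' t := by
  have := csInf_le hf (mem_range_self (x t))
  unfold globalEnergy
  linarith

end GlobalEnergy

namespace IsStrongSolutionV

variable {f φ : H → ℝ} {x x' : ℝ → H}

theorem continuousOn (hsol : IsStrongSolutionV f φ x x') : ContinuousOn x (Ici 0) :=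
  fun t ht => (hsol.hasDeriv t ht).continuousWithinAt

theorem hasDerivWithinAt_comp (hsol : IsStrongSolutionV f φ x x') {g : H → ℝ} {t : ℝ}
    (hg : DifferentiableAt ℝ g (x t)) (ht : 0 ≤ t) :
    HasDerivWithinAt (fun τ => g (x τ)) ⟪gradient g (x t), x' t⟫ (Ici 0) t := by
  have := hg.hasGradientAt.hasFDerivAt.comp_hasDerivWithinAt t (hsol.hasDeriv t ht)
  rwa [InnerProductSpace.toDual_apply_apply] at this

theorem intervalIntegrable_comp_deriv (hsol : IsStrongSolutionV f φ x x') {g : H → ℝ}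
    (hg : Continuous g) {s t : ℝ} (hs : 0 ≤ s) (ht : 0 ≤ t) :
    IntervalIntegrable (fun τ => g (x' τ)) volume s t :=
  ((hg.comp_continuousOn hsol.contDeriv).mono fun _ hτ =>
    (le_inf hs ht).trans hτ.1).intervalIntegrable

theorem absolutelyContinuousOnInterval_globalEnergy (hsol : IsStrongSolutionV f φ x x')
    (hf : Differentiable ℝ f) (hgrad : ∀ s : Set H, IsBounded s → IsBounded (gradient f '' s))
    {T : ℝ} (hT : 0 < T) : AbsolutelyContinuousOnInterval (globalEnergy f x x') 0 T := by
  have hIcc : Icc 0 T ⊆ Ici (0:ℝ) := Icc_subset_Ici_self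
  have hT' : uIcc 0 T = Icc 0 T := uIcc_of_le hT.le
  obtain ⟨M, hM⟩ := isCompact_Icc.exists_bound_of_continuousOn (hsol.contDeriv.mono hIcc)
  obtain ⟨G, hG⟩ := (hgrad _
    (isCompact_Icc.image_of_continuousOn (hsol.continuousOn.mono hIcc)).isBounded).exists_norm_le
  have hfx : LipschitzOnWith (G * M).toNNReal (fun t => f (x t)) (Icc 0 T) := by
    refine (convex_Icc 0 T).lipschitzOnWith_of_nnnorm_hasDerivWithin_le
      (fun t ht => (hsol.hasDerivWithinAt_comp (hf _) ht.1).mono hIcc) fun t ht => ?_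
    have hGt := hG _ (mem_image_of_mem _ (mem_image_of_mem x ht))
    rw [← NNReal.coe_le_coe, coe_nnnorm]
    calc ‖⟪gradient f (x t), x' t⟫‖ ≤ ‖gradient f (x t)‖ * ‖x' t‖ := norm_inner_le_norm _ _
      _ ≤ G * M := mul_le_mul hGt (hM t ht) (norm_nonneg _) ((norm_nonneg _).trans hGt)
      _ ≤ (G * M).toNNReal := Real.le_coe_toNNReal _
  obtain ⟨K, hK⟩ := hsol.lipDeriv T hT
  have hspeed : AbsolutelyContinuousOnInterval (fun t => ‖x' t‖) 0 T :=
    (lipschitzWith_one_norm.comp_lipschitzOnWith (hT' ▸ hK)).absolutelyContinuousOnInterval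
  have hconst : AbsolutelyContinuousOnInterval (fun _ => sInf (range f)) 0 T :=
    (LipschitzWith.const _).lipschitzOnWith.absolutelyContinuousOnInterval (K := 0)
  have hE : globalEnergy f x x' =
      fun t => f (x t) - sInf (range f) + 1/2 * (‖x' t‖ * ‖x' t‖) := by
    funext t
    rw [globalEnergy, sq]
  rw [hE]
  exact ((hT' ▸ hfx).absolutelyContinuousOnInterval.sub hconst).add
    ((hspeed.mul hspeed).const_mul (1/2))

theorem ae_hasDerivAt_globalEnergy_le (hsol : IsStrongSolutionV f φ x x')
    (hf : Differentiable ℝ f) :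
    ∀ᵐ t, 0 < t → ∃ E', HasDerivAt (globalEnergy f x x') E' t ∧ E' ≤ -(φ (x' t) - φ 0) := by
  filter_upwards [hsol.inclusion] with t ht htpos
  obtain ⟨a, ha, ξ, hξ, heq⟩ := ht htpos
  have hpot := (hsol.hasDerivWithinAt_comp (hf _) htpos.le).hasDerivAt (Ici_mem_nhds htpos)
  have hkin := ha.norm_sq.const_mul (1/2)
  refine ⟨_, (hpot.sub_const (sInf (range f))).add hkin, ?_⟩
  have ha' : a = -(ξ + gradient f (x t)) := eq_neg_of_add_eq_zero_left (by rwa [← add_assoc])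
  have := sub_le_inner_of_mem_subdiff hξ
  rw [ha', inner_neg_right, inner_add_right, real_inner_comm ξ,
    real_inner_comm (gradient f (x t))]
  linarith

theorem globalEnergy_add_integral_le (hsol : IsStrongSolutionV f φ x x')
    (hf : Differentiable ℝ f) (hgrad : ∀ s : Set H, IsBounded s → IsBounded (gradient f '' s))
    (hφ : IsDampingPotential φ) {s t : ℝ} (hs : 0 ≤ s) (hst : s ≤ t) :
    globalEnergy f x x' t + ∫ τ in s..t, φ (x' τ) ≤ globalEnergy f x x' s := by
  rcases hst.eq_or_lt with rfl | hlt
  · simp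
  have hac := (hsol.absolutelyContinuousOnInterval_globalEnergy hf hgrad
    (hs.trans_lt hlt)).mono (uIcc_subset_uIcc_right (mem_uIcc_of_le hs hst))
  have := hac.sub_le_integral_of_ae_hasDerivAt_le (m := fun τ => -φ (x' τ)) hst
    (hsol.intervalIntegrable_comp_deriv hφ.continuous hs (hs.trans hst)).neg ?_
  · rw [intervalIntegral.integral_neg] at this
    linarith
  filter_upwards [hsol.ae_hasDerivAt_globalEnergy_le hf] with τ hτ hmem
  simpa [hφ.map_zero] using hτ (hs.trans_lt hmem.1)

theorem antitoneOn_globalEnergy (hsol : IsStrongSolutionV f φ x x') (hf : Differentiable ℝ f)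
    (hgrad : ∀ s : Set H, IsBounded s → IsBounded (gradient f '' s))
    (hφ : IsDampingPotential φ) : AntitoneOn (globalEnergy f x x') (Ici 0) :=
  fun s hs _ _ hst => by
    have := hsol.globalEnergy_add_integral_le hf hgrad hφ hs hst
    have := intervalIntegral.integral_nonneg (μ := volume) hst fun τ _ => hφ.nonneg (x' τ)
    linarith

theorem norm_deriv_le (hsol : IsStrongSolutionV f φ x x') (hf : Differentiable ℝ f)
    (hgrad : ∀ s : Set H, IsBounded s → IsBounded (gradient f '' s))
    (hfbdd : BddBelow (range f)) (hφ : IsDampingPotential φ) {t : ℝ} (ht : 0 ≤ t) :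
    ‖x' t‖ ≤ √(2 * globalEnergy f x x' 0) := by
  refine Real.le_sqrt_of_sq_le ?_
  have := hsol.antitoneOn_globalEnergy hf hgrad hφ self_mem_Ici ht ht
  linarith [half_sq_norm_le_globalEnergy hfbdd x x' t]

theorem integrableOn_damping (hsol : IsStrongSolutionV f φ x x') (hf : Differentiable ℝ f)
    (hgrad : ∀ s : Set H, IsBounded s → IsBounded (gradient f '' s))
    (hfbdd : BddBelow (range f)) (hφ : IsDampingPotential φ) :
    IntegrableOn (fun t => φ (x' t)) (Ioi 0) := by
  have hint (n : ℕ) := hsol.intervalIntegrable_comp_deriv hφ.continuous le_rfl n.cast_nonneg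
  refine integrableOn_Ioi_of_intervalIntegral_norm_bounded (globalEnergy f x x' 0) 0
    (fun n => (hint n).1) tendsto_natCast_atTop_atTop (Eventually.of_forall fun n => ?_)
  simp_rw [Real.norm_of_nonneg (hφ.nonneg _)]
  have := hsol.globalEnergy_add_integral_le hf hgrad hφ le_rfl n.cast_nonneg
  have : 0 ≤ 1/2 * ‖x' n‖ ^ 2 := by positivity
  linarith [half_sq_norm_le_globalEnergy hfbdd x x' n]

theorem ae_norm_acceleration_le (hsol : IsStrongSolutionV f φ x x') {G S : ℝ}
    (hG : ∀ t, 0 < t → ‖gradient f (x t)‖ ≤ G)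
    (hS : ∀ t, 0 < t → ∀ ξ ∈ subdiff φ (x' t), ‖ξ‖ ≤ S) :
    ∀ᵐ t, 0 < t → ∃ a, HasDerivAt x' a t ∧ ‖a‖ ≤ S + G := by
  filter_upwards [hsol.inclusion] with t ht htpos
  obtain ⟨a, ha, ξ, hξ, heq⟩ := ht htpos
  refine ⟨a, ha, ?_⟩
  rw [eq_neg_of_add_eq_zero_left (by rwa [← add_assoc] : a + (ξ + gradient f (x t)) = 0),
    norm_neg]
  exact (norm_add_le _ _).trans (add_le_add (hS t htpos ξ hξ) (hG t htpos))

theorem exists_lipschitzOnWith_deriv (hsol : IsStrongSolutionV f φ x x')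
    (hf : Differentiable ℝ f) (hgrad : ∀ s : Set H, IsBounded s → IsBounded (gradient f '' s))
    (hfbdd : BddBelow (range f)) (hφ : IsDampingPotential φ)
    (hx : ∃ R, ∀ t ∈ Ici (0:ℝ), ‖x t‖ ≤ R) : ∃ K, LipschitzOnWith K x' (Ici 0) := by
  obtain ⟨R, hR⟩ := hx
  obtain ⟨G, hG⟩ := (hgrad _ (isBounded_closedBall (x := (0:H)) (r := R))).exists_norm_le
  obtain ⟨S, hS⟩ := hφ.exists_norm_subdiff_le (√(2 * globalEnergy f x x' 0))
  refine ⟨(S + G).toNNReal, lipschitzOnWith_Ici_of_ae_hasDerivAt_norm_le hsol.lipDeriv ?_⟩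
  filter_upwards [hsol.ae_norm_acceleration_le
    (fun t ht => hG _ (mem_image_of_mem _ (mem_closedBall_zero_iff.2 (hR t ht.le))))
    (fun t ht ξ => hS _ ξ (hsol.norm_deriv_le hf hgrad hfbdd hφ ht.le))] with t ht htpos
  obtain ⟨a, ha, hle⟩ := ht htpos
  exact ⟨a, ha, hle.trans (Real.le_coe_toNNReal _)⟩

theorem tendsto_norm_deriv_atTop (hsol : IsStrongSolutionV f φ x x')
    (hf : Differentiable ℝ f) (hgrad : ∀ s : Set H, IsBounded s → IsBounded (gradient f '' s))
    (hfbdd : BddBelow (range f)) (hφ : IsDampingPotential φ)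
    (hx : ∃ R, ∀ t ∈ Ici (0:ℝ), ‖x t‖ ≤ R) {p r : ℝ} (hp : 0 < p) (hr : 0 < r)
    (hφp : ∀ u, r * ‖u‖ ^ p ≤ φ u) : Tendsto (fun t => ‖x' t‖) atTop (𝓝 0) := by
  obtain ⟨K, hK⟩ := hsol.exists_lipschitzOnWith_deriv hf hgrad hfbdd hφ hx
  obtain ⟨L, hL⟩ := hφ.exists_lipschitzOnWith (√(2 * globalEnergy f x x' 0))
  have hmaps : MapsTo x' (Ici 0) (closedBall 0 (√(2 * globalEnergy f x x' 0))) :=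
    fun t ht => mem_closedBall_zero_iff.2 (hsol.norm_deriv_le hf hgrad hfbdd hφ ht)
  have hdamp : Tendsto (fun t => φ (x' t)) atTop (𝓝 0) :=
    tendsto_zero_of_uniformContinuousOn_of_integrableOn (hL.comp hK hmaps).uniformContinuousOn
      (hsol.integrableOn_damping hf hgrad hfbdd hφ)
  have hpow : Tendsto (fun t => ‖x' t‖ ^ p) atTop (𝓝 0) := by
    refine squeeze_zero (fun t => by positivity) (fun t => (le_div_iff₀' hr).2 (hφp (x' t))) ?_
    simpa using hdamp.div_const r
  have := hpow.rpow_const (Or.inr (inv_nonneg.2 hp.le))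
  rw [Real.zero_rpow (inv_ne_zero hp.ne')] at this
  exact this.congr fun t => Real.rpow_rpow_inv (norm_nonneg _) hp.ne'

end IsStrongSolutionV

/-- **(ADIGE-V) energy estimates (Proposition 4.1).**
For a strong global solution of `0 ∈ ẍ + ∂φ(ẋ) + ∇f(x)`:
(i) the global energy `f(x(t)) - inf f + ½‖ẋ(t)‖²` is nonincreasing on `[0,∞)`;
(ii) the velocity is bounded and `∫₀^∞ φ(ẋ(t)) dt < ∞`;
(iii) if the trajectory is bounded then `ẋ` is Lipschitz on `[0,∞)`;
(iv) if furthermore `φ(u) ≥ r‖u‖^p` for some `p ≥ 1`, `r > 0`, then `‖ẋ(t)‖ → 0`. -/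
theorem adigeV_energy_estimates
    (f : H → ℝ) (hfdiff : Differentiable ℝ f)
    (hflip : ∀ s : Set H, IsBounded s → ∃ K : ℝ≥0, LipschitzOnWith K (gradient f) s)
    (hfbdd : BddBelow (Set.range f))
    (φ : H → ℝ) (hφ : IsDampingPotential φ)
    (x x' : ℝ → H) (hsol : IsStrongSolutionV f φ x x') :
    AntitoneOn (fun t => f (x t) - sInf (Set.range f) + (1/2) * ‖x' t‖ ^ 2)
        (Set.Ici 0) ∧
    (∃ M : ℝ, ∀ t ∈ Set.Ici (0:ℝ), ‖x' t‖ ≤ M) ∧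
    MeasureTheory.IntegrableOn (fun t => φ (x' t)) (Set.Ioi 0) ∧
    ((∃ R : ℝ, ∀ t ∈ Set.Ici (0:ℝ), ‖x t‖ ≤ R) →
        ∃ K : ℝ≥0, LipschitzOnWith K x' (Set.Ici 0)) ∧
    ((∃ R : ℝ, ∀ t ∈ Set.Ici (0:ℝ), ‖x t‖ ≤ R) →
        (∃ p : ℝ, 1 ≤ p ∧ ∃ r : ℝ, 0 < r ∧ ∀ u : H, r * ‖u‖ ^ p ≤ φ u) →
        Tendsto (fun t => ‖x' t‖) atTop (𝓝 0)) := by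
  have hgrad : ∀ s : Set H, IsBounded s → IsBounded (gradient f '' s) := fun s hs =>
    (hflip s hs).elim fun _ hK => hK.isBounded_image hs
  exact ⟨hsol.antitoneOn_globalEnergy hfdiff hgrad hφ,
    ⟨_, fun t ht => hsol.norm_deriv_le hfdiff hgrad hfbdd hφ ht⟩,
    hsol.integrableOn_damping hfdiff hgrad hfbdd hφ,
    hsol.exists_lipschitzOnWith_deriv hfdiff hgrad hfbdd hφ,
    fun hx ⟨p, hp, r, hr, hφp⟩ =>
      hsol.tendsto_norm_deriv_atTop hfdiff hgrad hfbdd hφ hx (by linarith) hr hφp⟩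
end
end

section
/- Let H be a real Hilbert space, let μ > 0, and let f : H → ℝ be differentiable and μ-strongly convex with ∇f Lipschitz continuous on every bounded subset of H; let x̄ be its unique minimizer. Let φ : H → [0,∞) be a damping potential which is differentiable with ∇φ Lipschitz continuous on every bounded subset of H, and assume: (i) there exist α > 0 and ρ > 0 such that ⟨∇φ(u), u⟩ ≥ α‖u‖² whenever ‖u‖ ≤ ρ; (ii) there exist p ≥ 1 and c > 0 such that φ(u) ≥ c‖u‖^p for all u ∈ H. Then for every twice continuously differentiable solution x : [0,∞) → H of ẍ(t) + ∇φ(ẋ(t)) + ∇f(x(t)) = 0, there exist constants K ≥ 0 and λ > 0 such that for all t ≥ 0: f(x(t)) − f(x̄) ≤ K e^{−λt}, ‖x(t) − x̄‖ ≤ K e^{−λt}, and ‖ẋ(t)‖ ≤ K e^{−λt}. -/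
/-!
The energy `f x - f x̄ + ‖ẋ‖² / 2` is nonincreasing, since it dissipates at rate
`⟪∇φ ẋ, ẋ⟫ ≥ 0`; hence the velocity stays in a ball of some radius `R`. On that ball `∇φ` is
`L`-Lipschitz with `∇φ 0 = 0`, and, `∇φ` being monotone along rays, the local growth at radius
`ρ` extends to `⟪∇φ u, u⟫ ≥ a ‖u‖²`. For small `ε` the perturbed energy
`V = f x - f x̄ + ‖ẋ‖² / 2 + ε ⟪x - x̄, ẋ⟫` then satisfies `V' ≤ -ε V`: strong convexity of `f`
and Young's inequality absorb the cross terms. So `V t ≤ V 0 e^{-εt}`, and `V` dominates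
`f x - f x̄`, `‖x - x̄‖²` and `‖ẋ‖²`, which decay at rate `ε`; their square roots decay at rate
`ε / 2`.
-/

open Set Filter Topology MeasureTheory Metric Bornology
open scoped RealInnerProductSpace NNReal

noncomputable section

variable {H : Type*} [NormedAddCommGroup H] [InnerProductSpace ℝ H] [CompleteSpace H]

theorem ConvexOn.add_fderiv_sub_le {E : Type*} [NormedAddCommGroup E] [NormedSpace ℝ E]
    {s : Set E} {f : E → ℝ} {f' : E →L[ℝ] ℝ} {x y : E} (hf : ConvexOn ℝ s f) (hx : x ∈ s)
    (hy : y ∈ s) (hf' : HasFDerivAt f f' x) : f x + f' (y - x) ≤ f y := by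
  have hline : ConvexOn ℝ (Icc (0 : ℝ) 1) (f ∘ AffineMap.lineMap x y) :=
    (hf.comp_affineMap _).subset (fun _ hr => hf.1.lineMap_mem hx hy hr) (convex_Icc 0 1)
  have hderiv : HasDerivAt (f ∘ AffineMap.lineMap x y) (f' (y - x)) (0 : ℝ) :=
    hf'.comp_hasDerivAt_of_eq 0 AffineMap.hasDerivAt_lineMap (by simp)
  have := hline.le_slope_of_hasDerivAt (left_mem_Icc.2 zero_le_one)
    (right_mem_Icc.2 zero_le_one) one_pos hderiv
  simp only [slope_def_field, Function.comp_apply, AffineMap.lineMap_apply_zero,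
    AffineMap.lineMap_apply_one, sub_zero, div_one] at this
  linarith

theorem LipschitzOnWith.norm_le_mul_norm {E F : Type*} [SeminormedAddCommGroup E]
    [SeminormedAddCommGroup F] {g : E → F} {K : ℝ≥0} {s : Set E} (h : LipschitzOnWith K g s)
    (h₀ : 0 ∈ s) (hg : g 0 = 0) {v : E} (hv : v ∈ s) : ‖g v‖ ≤ K * ‖v‖ := by
  simpa [hg] using h.norm_sub_le hv h₀

theorem Convex.antitoneOn_of_hasDerivWithinAt_nonpos {s : Set ℝ} (hs : Convex ℝ s)
    {V V' : ℝ → ℝ} (hV : ∀ t ∈ s, HasDerivWithinAt V (V' t) s t) (hV' : ∀ t ∈ s, V' t ≤ 0) :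
    AntitoneOn V s :=
  _root_.antitoneOn_of_hasDerivWithinAt_nonpos hs (fun t ht => (hV t ht).continuousWithinAt)
    (fun t ht => ((hV t (interior_subset ht)).hasDerivAt
      (mem_interior_iff_mem_nhds.1 ht)).hasDerivWithinAt)
    (fun t ht => hV' t (interior_subset ht))

theorem Convex.le_mul_exp_of_hasDerivWithinAt {s : Set ℝ} (hs : Convex ℝ s) {V V' : ℝ → ℝ}
    {lam : ℝ} (hV : ∀ t ∈ s, HasDerivWithinAt V (V' t) s t)
    (hV' : ∀ t ∈ s, V' t + lam * V t ≤ 0) {t₀ t : ℝ} (ht₀ : t₀ ∈ s) (ht : t ∈ s)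
    (hle : t₀ ≤ t) : V t ≤ V t₀ * Real.exp (-lam * (t - t₀)) := by
  have hW : ∀ r ∈ s, HasDerivWithinAt (fun r => V r * Real.exp (lam * r))
      ((V' r + lam * V r) * Real.exp (lam * r)) s r := fun r hr => by
    refine ((hV r hr).mul ((hasDerivAt_id r).const_mul lam).exp.hasDerivWithinAt).congr_deriv ?_
    simp only [id]
    ring
  have hanti := hs.antitoneOn_of_hasDerivWithinAt_nonpos hW
    (fun r hr => mul_nonpos_of_nonpos_of_nonneg (hV' r hr) (Real.exp_pos _).le) ht₀ ht hle
  calc V t = V t * Real.exp (lam * t) * Real.exp (-lam * t) := by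
        rw [mul_assoc, ← Real.exp_add]; simp
    _ ≤ V t₀ * Real.exp (lam * t₀) * Real.exp (-lam * t) := by gcongr
    _ = V t₀ * Real.exp (-lam * (t - t₀)) := by
        rw [mul_assoc, ← Real.exp_add]; congr 2; ring

theorem Real.le_sqrt_mul_exp_of_sq_le {a C lam t : ℝ} (hC : 0 ≤ C)
    (h : a ^ 2 ≤ C * Real.exp (-lam * t)) : a ≤ √C * Real.exp (-(lam / 2) * t) := by
  rw [show -(lam / 2) * t = -lam * t / 2 by ring, Real.exp_half, ← Real.sqrt_mul hC]
  exact Real.le_sqrt_of_sq_le h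

theorem exists_exp_bound_of_sq_le {a b c : ℝ → ℝ} {C lam : ℝ} (hC : 0 ≤ C) (hlam : 0 < lam)
    (h : ∀ t ∈ Ici (0 : ℝ), a t ≤ C * Real.exp (-lam * t) ∧ b t ^ 2 ≤ C * Real.exp (-lam * t) ∧
      c t ^ 2 ≤ C * Real.exp (-lam * t)) :
    ∃ K : ℝ, 0 ≤ K ∧ ∃ lam' : ℝ, 0 < lam' ∧ ∀ t ∈ Ici (0 : ℝ),
      a t ≤ K * Real.exp (-lam' * t) ∧ b t ≤ K * Real.exp (-lam' * t) ∧
      c t ≤ K * Real.exp (-lam' * t) := by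
  refine ⟨C + √C, by positivity, lam / 2, half_pos hlam, fun t ht => ?_⟩
  obtain ⟨ha, hb', hc'⟩ := h t ht
  have hexp : Real.exp (-lam * t) ≤ Real.exp (-(lam / 2) * t) := by
    gcongr
    nlinarith [show (0 : ℝ) ≤ t from ht]
  have hC₁ : C ≤ C + √C := le_add_of_nonneg_right (Real.sqrt_nonneg C)
  have hC₂ : √C ≤ C + √C := le_add_of_nonneg_left hC
  refine ⟨?_, ?_, ?_⟩
  · calc a t ≤ C * Real.exp (-(lam / 2) * t) := ha.trans (by gcongr)
      _ ≤ (C + √C) * Real.exp (-(lam / 2) * t) := by gcongr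
  · calc b t ≤ √C * Real.exp (-(lam / 2) * t) := Real.le_sqrt_mul_exp_of_sq_le hC hb'
      _ ≤ (C + √C) * Real.exp (-(lam / 2) * t) := by gcongr
  · calc c t ≤ √C * Real.exp (-(lam / 2) * t) := Real.le_sqrt_mul_exp_of_sq_le hC hc'
      _ ≤ (C + √C) * Real.exp (-(lam / 2) * t) := by gcongr

theorem exists_lyapunov_rate {μ a L : ℝ} (hμ : 0 < μ) (ha : 0 < a) :
    ∃ ε, 0 < ε ∧ ε ≤ 1 / 2 ∧ ε ≤ μ / 2 ∧ ε * (2 + L ^ 2 / μ) ≤ a := by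
  have hD : 0 < 2 + L ^ 2 / μ := by positivity
  refine ⟨min (min (1 / 2) (μ / 2)) (a / (2 + L ^ 2 / μ)),
    lt_min (lt_min one_half_pos (half_pos hμ)) (div_pos ha hD),
    (min_le_left _ _).trans (min_le_left _ _), (min_le_left _ _).trans (min_le_right _ _),
    (le_div_iff₀ hD).1 (min_le_right _ _)⟩

section

variable {E : Type*} [NormedAddCommGroup E] [InnerProductSpace ℝ E]

def lyapunov (f : E → ℝ) (xbar : E) (ε : ℝ) (x x' : ℝ → E) (t : ℝ) : ℝ :=
  f (x t) - f xbar + ‖x' t‖ ^ 2 / 2 + ε * ⟪x t - xbar, x' t⟫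

theorem exists_norm_le_of_antitoneOn_lyapunov {f : E → ℝ} {xbar : E} {x x' : ℝ → E}
    (hxbar : ∀ y, f xbar ≤ f y) (h : AntitoneOn (lyapunov f xbar 0 x x') (Ici 0)) :
    ∃ R, 0 ≤ R ∧ ∀ t ∈ Ici (0 : ℝ), ‖x' t‖ ≤ R := by
  refine ⟨√(2 * lyapunov f xbar 0 x x' 0), Real.sqrt_nonneg _, fun t ht => ?_⟩
  have hE := h self_mem_Ici ht ht
  have := hxbar (x t)
  rw [← abs_norm]
  apply Real.abs_le_sqrt
  simp only [lyapunov, zero_mul, add_zero] at hE ⊢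
  linarith

/-- `V' + ε V ≤ 0` at one instant, with `y = x - x̄`, `v = ẋ`, `w = ẍ`, `q = ∇φ ẋ`, `g = ∇f x`
and `F = f x - f x̄`. -/
theorem lyapunov_deriv_add_le {μ ε a L F : ℝ} {y v q g w : E} (hμ : 0 < μ) (hε : 0 ≤ ε)
    (hε₁ : ε ≤ 1 / 2) (hεμ : ε ≤ μ / 2) (hεa : ε * (2 + L ^ 2 / μ) ≤ a)
    (hq : a * ‖v‖ ^ 2 ≤ ⟪q, v⟫) (hqL : ‖q‖ ≤ L * ‖v‖) (hg : F + μ / 2 * ‖y‖ ^ 2 ≤ ⟪y, g⟫)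
    (hw : w + q + g = 0) :
    ⟪g, v⟫ + ⟪v, w⟫ + ε * (‖v‖ ^ 2 + ⟪y, w⟫) + ε * (F + ‖v‖ ^ 2 / 2 + ε * ⟪y, v⟫) ≤ 0 := by
  obtain rfl : w = -q - g := by rw [← sub_eq_zero, ← hw]; abel
  have hyq : -⟪y, q⟫ ≤ μ / 4 * ‖y‖ ^ 2 + L ^ 2 / μ * ‖v‖ ^ 2 := by
    have hcs : -⟪y, q⟫ ≤ ‖y‖ * (L * ‖v‖) :=
      (neg_le_abs _).trans ((abs_real_inner_le_norm y q).trans (by gcongr))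
    have hyoung : ‖y‖ * (L * ‖v‖) ≤ μ / 4 * ‖y‖ ^ 2 + L ^ 2 / μ * ‖v‖ ^ 2 := by
      have hsq : 0 ≤ (μ / 2 * ‖y‖ - L * ‖v‖) ^ 2 / μ := by positivity
      calc ‖y‖ * (L * ‖v‖)
          = μ / 4 * ‖y‖ ^ 2 + L ^ 2 / μ * ‖v‖ ^ 2 - (μ / 2 * ‖y‖ - L * ‖v‖) ^ 2 / μ := by
            field_simp; ring
        _ ≤ μ / 4 * ‖y‖ ^ 2 + L ^ 2 / μ * ‖v‖ ^ 2 := by linarith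
    linarith
  have hyv : ε * ⟪y, v⟫ ≤ μ / 4 * ‖y‖ ^ 2 + 1 / 4 * ‖v‖ ^ 2 := by
    have := real_inner_le_norm y v
    have := two_mul_le_add_sq ‖y‖ ‖v‖
    nlinarith [mul_le_mul_of_nonneg_right hεμ (sq_nonneg ‖y‖),
      mul_le_mul_of_nonneg_right hε₁ (sq_nonneg ‖v‖)]
  have hbracket : ‖v‖ ^ 2 - ⟪y, q⟫ - ⟪y, g⟫ + F + ‖v‖ ^ 2 / 2 + ε * ⟪y, v⟫
      ≤ (2 + L ^ 2 / μ) * ‖v‖ ^ 2 := by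
    linarith [sq_nonneg ‖v‖]
  calc ⟪g, v⟫ + ⟪v, -q - g⟫ + ε * (‖v‖ ^ 2 + ⟪y, -q - g⟫) + ε * (F + ‖v‖ ^ 2 / 2 + ε * ⟪y, v⟫)
      = -⟪q, v⟫ + ε * (‖v‖ ^ 2 - ⟪y, q⟫ - ⟪y, g⟫ + F + ‖v‖ ^ 2 / 2 + ε * ⟪y, v⟫) := by
        simp only [inner_sub_right, inner_neg_right, real_inner_comm v]
        ring
    _ ≤ -(a * ‖v‖ ^ 2) + ε * ((2 + L ^ 2 / μ) * ‖v‖ ^ 2) := by gcongr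
    _ ≤ 0 := by linarith [mul_le_mul_of_nonneg_right hεa (sq_nonneg ‖v‖)]

theorem le_mul_of_lyapunov_le {f : E → ℝ} {xbar : E} {x x' : ℝ → E} {μ ε B t : ℝ}
    (hμ : 0 < μ) (hε : 0 ≤ ε) (hε₁ : ε ≤ 1 / 2) (hεμ : ε ≤ μ / 2)
    (hF : μ / 2 * ‖x t - xbar‖ ^ 2 ≤ f (x t) - f xbar) (hB : lyapunov f xbar ε x x' t ≤ B) :
    f (x t) - f xbar ≤ 4 * (1 + 1 / μ) * B ∧ ‖x t - xbar‖ ^ 2 ≤ 4 * (1 + 1 / μ) * B ∧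
      ‖x' t‖ ^ 2 ≤ 4 * (1 + 1 / μ) * B := by
  set y := x t - xbar
  set v := x' t
  have hB' : f (x t) - f xbar + ‖v‖ ^ 2 / 2 + ε * ⟪y, v⟫ ≤ B := hB
  have hlow : (f (x t) - f xbar) / 2 + ‖v‖ ^ 2 / 4 ≤ B := by
    have := neg_le_of_abs_le (abs_real_inner_le_norm y v)
    have := two_mul_le_add_sq ‖y‖ ‖v‖
    nlinarith [mul_le_mul_of_nonneg_right hεμ (sq_nonneg ‖y‖),
      mul_le_mul_of_nonneg_right hε₁ (sq_nonneg ‖v‖)]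
  have hy : ‖y‖ ^ 2 ≤ 4 * B / μ := by
    rw [le_div_iff₀ hμ]
    nlinarith [sq_nonneg ‖v‖]
  have hB₀ : 0 ≤ B := by nlinarith [sq_nonneg ‖y‖, sq_nonneg ‖v‖]
  have hκ : 4 * (1 + 1 / μ) * B = 4 * B + 4 * B / μ := by ring
  have : 0 ≤ 4 * B / μ := by positivity
  refine ⟨?_, ?_, ?_⟩ <;> nlinarith [sq_nonneg ‖v‖, sq_nonneg ‖y‖]

variable [CompleteSpace E]

theorem IsLocalMin.gradient_eq_zero {f : E → ℝ} {x : E} (h : IsLocalMin f x) :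
    gradient f x = 0 := by
  simp [gradient, h.fderiv_eq_zero]

theorem ConvexOn.add_inner_gradient_sub_le {f : E → ℝ} {x : E} (hf : ConvexOn ℝ univ f)
    (hd : DifferentiableAt ℝ f x) (y : E) : f x + ⟪gradient f x, y - x⟫ ≤ f y := by
  simpa using hf.add_fderiv_sub_le (mem_univ x) (mem_univ y) hd.hasGradientAt.hasFDerivAt

theorem ConvexOn.inner_gradient_sub_gradient_nonneg {f : E → ℝ} {x y : E}
    (hf : ConvexOn ℝ univ f) (hx : DifferentiableAt ℝ f x) (hy : DifferentiableAt ℝ f y) :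
    0 ≤ ⟪gradient f y - gradient f x, y - x⟫ := by
  have h₁ := hf.add_inner_gradient_sub_le hx y
  have h₂ := hf.add_inner_gradient_sub_le hy x
  rw [← neg_sub y x, inner_neg_right] at h₂
  rw [inner_sub_left]
  linarith

theorem ConvexOn.inner_gradient_smul_le {f : E → ℝ} (hf : ConvexOn ℝ univ f)
    (hd : Differentiable ℝ f) (v : E) {s : ℝ} (hs : s ≤ 1) :
    ⟪gradient f (s • v), v⟫ ≤ ⟪gradient f v, v⟫ := by
  have h := hf.inner_gradient_sub_gradient_nonneg (hd (s • v)) (hd v)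
  rw [show v - s • v = (1 - s) • v by rw [sub_smul, one_smul], inner_smul_right,
    inner_sub_left] at h
  rcases hs.eq_or_lt with rfl | hs
  · simp
  · nlinarith

/-- `∇f` is monotone along the ray through `v`, so the bound at the point `(ρ / ‖v‖) • v` of the
sphere of radius `ρ` propagates outwards. -/
theorem ConvexOn.mul_norm_le_inner_gradient {f : E → ℝ} (hf : ConvexOn ℝ univ f)
    (hd : Differentiable ℝ f) {α ρ : ℝ} (hρ : 0 < ρ)
    (hloc : ∀ u : E, ‖u‖ ≤ ρ → α * ‖u‖ ^ 2 ≤ ⟪gradient f u, u⟫) {v : E} (hv : ρ ≤ ‖v‖) :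
    α * ρ * ‖v‖ ≤ ⟪gradient f v, v⟫ := by
  have hv₀ : 0 < ‖v‖ := hρ.trans_le hv
  set s := ρ / ‖v‖
  have hs : ‖s • v‖ = ρ := by
    rw [norm_smul, Real.norm_of_nonneg (by positivity), div_mul_cancel₀ _ hv₀.ne']
  have hmono := hf.inner_gradient_smul_le hd v (div_le_one_of_le₀ hv hv₀.le)
  have hball := hloc (s • v) hs.le
  rw [hs, inner_smul_right] at hball
  calc α * ρ * ‖v‖ = ‖v‖ / ρ * (α * ρ ^ 2) := by field_simp
    _ ≤ ‖v‖ / ρ * (s * ⟪gradient f (s • v), v⟫) := by gcongr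
    _ = ⟪gradient f (s • v), v⟫ := by simp only [s]; field_simp
    _ ≤ ⟪gradient f v, v⟫ := hmono

theorem ConvexOn.exists_pos_mul_sq_le_inner_gradient {f : E → ℝ} (hf : ConvexOn ℝ univ f)
    (hd : Differentiable ℝ f) {α ρ : ℝ} (hα : 0 < α) (hρ : 0 < ρ)
    (hloc : ∀ u : E, ‖u‖ ≤ ρ → α * ‖u‖ ^ 2 ≤ ⟪gradient f u, u⟫) (R : ℝ) :
    ∃ a > 0, ∀ v : E, ‖v‖ ≤ R → a * ‖v‖ ^ 2 ≤ ⟪gradient f v, v⟫ := by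
  have hR : 0 < max R ρ := hρ.trans_le (le_max_right R ρ)
  refine ⟨α * ρ / max R ρ, by positivity, fun v hv => ?_⟩
  rcases le_or_gt ‖v‖ ρ with hvρ | hvρ
  · refine le_trans ?_ (hloc v hvρ)
    gcongr
    exact div_le_of_le_mul₀ hR.le hα.le (by gcongr; exact le_max_right R ρ)
  · refine le_trans ?_ (hf.mul_norm_le_inner_gradient hd hρ hloc hvρ.le)
    calc α * ρ / max R ρ * ‖v‖ ^ 2 = α * ρ * ‖v‖ * (‖v‖ / max R ρ) := by ring
      _ ≤ α * ρ * ‖v‖ * 1 := by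
        gcongr
        exact div_le_one_of_le₀ (hv.trans (le_max_left R ρ)) hR.le
      _ = α * ρ * ‖v‖ := mul_one _

theorem StrongConvexOn.add_inner_gradient_add_sq_le {s : Set E} {μ : ℝ} {f : E → ℝ} {x y : E}
    (hf : StrongConvexOn s μ f) (hx : x ∈ s) (hy : y ∈ s) (hd : DifferentiableAt ℝ f x) :
    f x + ⟪gradient f x, y - x⟫ + μ / 2 * ‖y - x‖ ^ 2 ≤ f y := by
  have h := (strongConvexOn_iff_convex.1 hf).add_fderiv_sub_le hx hy
    (hd.hasFDerivAt.sub ((hasStrictFDerivAt_norm_sq x).hasFDerivAt.const_mul (μ / 2)))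
  simp only [sub_apply, smul_apply, innerSL_apply_apply, smul_eq_mul, nsmul_eq_mul,
    Nat.cast_ofNat, ← inner_gradient_left] at h
  simp only [inner_sub_right, real_inner_self_eq_norm_sq] at h ⊢
  rw [norm_sub_sq_real, real_inner_comm x y]
  linarith

theorem StrongConvexOn.sub_add_sq_le_inner_gradient {s : Set E} {μ : ℝ} {f : E → ℝ} {x y : E}
    (hf : StrongConvexOn s μ f) (hx : x ∈ s) (hy : y ∈ s) (hd : DifferentiableAt ℝ f x) :
    f x - f y + μ / 2 * ‖x - y‖ ^ 2 ≤ ⟪x - y, gradient f x⟫ := by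
  have h := hf.add_inner_gradient_add_sq_le hx hy hd
  rw [← neg_sub x y, inner_neg_right, norm_neg, real_inner_comm] at h
  linarith

theorem StrongConvexOn.mul_sq_le_sub_of_forall_le {μ : ℝ} {f : E → ℝ} {xbar : E}
    (hf : StrongConvexOn univ μ f) (hd : DifferentiableAt ℝ f xbar) (hxbar : ∀ y, f xbar ≤ f y)
    (z : E) : μ / 2 * ‖z - xbar‖ ^ 2 ≤ f z - f xbar := by
  have h := hf.add_inner_gradient_add_sq_le (mem_univ xbar) (mem_univ z) hd
  rw [IsLocalMin.gradient_eq_zero (.of_forall hxbar), inner_zero_left] at h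
  linarith

theorem hasDerivWithinAt_lyapunov {f : E → ℝ} {xbar : E} (ε : ℝ) {x x' : ℝ → E} {a : E}
    {s : Set ℝ} {t : ℝ} (hf : DifferentiableAt ℝ f (x t)) (hx : HasDerivWithinAt x (x' t) s t)
    (hx' : HasDerivWithinAt x' a s t) :
    HasDerivWithinAt (lyapunov f xbar ε x x')
      (⟪gradient f (x t), x' t⟫ + ⟪x' t, a⟫ + ε * (‖x' t‖ ^ 2 + ⟪x t - xbar, a⟫)) s t := by
  have hfx : HasDerivWithinAt (fun r => f (x r)) ⟪gradient f (x t), x' t⟫ s t := by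
    rw [inner_gradient_left]
    exact hf.hasFDerivAt.comp_hasDerivWithinAt t hx
  refine (((hfx.sub_const (f xbar)).add (hx'.norm_sq.div_const 2)).add
    (((hx.sub_const xbar).inner ℝ hx').const_mul ε)).congr_deriv ?_
  rw [real_inner_self_eq_norm_sq]
  ring

theorem antitoneOn_lyapunov_zero {f φ : E → ℝ} {xbar : E} {x x' x'' : ℝ → E} {s : Set ℝ}
    (hs : Convex ℝ s) (hf : Differentiable ℝ f) (hφ : ∀ v, 0 ≤ ⟪gradient φ v, v⟫)
    (hx : ∀ t ∈ s, HasDerivWithinAt x (x' t) s t) (hx' : ∀ t ∈ s, HasDerivWithinAt x' (x'' t) s t)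
    (heq : ∀ t ∈ s, x'' t + gradient φ (x' t) + gradient f (x t) = 0) :
    AntitoneOn (lyapunov f xbar 0 x x') s := by
  refine hs.antitoneOn_of_hasDerivWithinAt_nonpos
    (fun t ht => hasDerivWithinAt_lyapunov 0 (hf _) (hx t ht) (hx' t ht)) fun t ht => ?_
  obtain hx'' : x'' t = -gradient φ (x' t) - gradient f (x t) := by
    rw [← sub_eq_zero, ← heq t ht]; abel
  rw [hx'', zero_mul, add_zero, inner_sub_right, inner_neg_right,
    real_inner_comm (gradient f (x t)), real_inner_comm (gradient φ (x' t))]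
  linarith [hφ (x' t)]

theorem lyapunov_le_mul_exp {f φ : E → ℝ} {xbar : E} {x x' x'' : ℝ → E} {s : Set ℝ}
    {μ ε a L : ℝ} (hs : Convex ℝ s) (hf : StrongConvexOn univ μ f) (hfd : Differentiable ℝ f)
    (hμ : 0 < μ) (hε : 0 ≤ ε) (hε₁ : ε ≤ 1 / 2) (hεμ : ε ≤ μ / 2)
    (hεa : ε * (2 + L ^ 2 / μ) ≤ a)
    (hφ : ∀ t ∈ s, a * ‖x' t‖ ^ 2 ≤ ⟪gradient φ (x' t), x' t⟫)
    (hφL : ∀ t ∈ s, ‖gradient φ (x' t)‖ ≤ L * ‖x' t‖)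
    (hx : ∀ t ∈ s, HasDerivWithinAt x (x' t) s t) (hx' : ∀ t ∈ s, HasDerivWithinAt x' (x'' t) s t)
    (heq : ∀ t ∈ s, x'' t + gradient φ (x' t) + gradient f (x t) = 0) {t₀ t : ℝ} (ht₀ : t₀ ∈ s)
    (ht : t ∈ s) (hle : t₀ ≤ t) :
    lyapunov f xbar ε x x' t ≤ lyapunov f xbar ε x x' t₀ * Real.exp (-ε * (t - t₀)) :=
  hs.le_mul_exp_of_hasDerivWithinAt
    (fun t ht => hasDerivWithinAt_lyapunov ε (hfd _) (hx t ht) (hx' t ht))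
    (fun t ht => lyapunov_deriv_add_le hμ hε hε₁ hεμ hεa (hφ t ht) (hφL t ht)
      (hf.sub_add_sq_le_inner_gradient (mem_univ _) (mem_univ xbar) (hfd _)) (heq t ht))
    ht₀ ht hle

end

theorem IsDampingPotential.gradient_zero {φ : H → ℝ} (hφ : IsDampingPotential φ) :
    gradient φ 0 = 0 :=
  IsLocalMin.gradient_eq_zero (.of_forall fun v => hφ.map_zero ▸ hφ.nonneg v)

theorem IsDampingPotential.inner_gradient_self_nonneg {φ : H → ℝ} (hφ : IsDampingPotential φ)
    (hd : Differentiable ℝ φ) (v : H) : 0 ≤ ⟪gradient φ v, v⟫ := by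
  simpa [hφ.gradient_zero] using hφ.convexOn.inner_gradient_sub_gradient_nonneg (hd 0) (hd v)

theorem adigeV_strongly_convex_exponential_rate_general
    (μ : ℝ) (hμ : 0 < μ)
    (f : H → ℝ) (hfdiff : Differentiable ℝ f)
    (hsc : ConvexOn ℝ Set.univ (fun y => f y - μ / 2 * ‖y‖ ^ 2))
    (xbar : H) (hxbar : ∀ y, f xbar ≤ f y)
    (φ : H → ℝ) (hφ : IsDampingPotential φ) (hφdiff : Differentiable ℝ φ)
    (hφlip : ∀ s : Set H, IsBounded s → ∃ K : ℝ≥0, LipschitzOnWith K (gradient φ) s)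
    (α ρ : ℝ) (hα : 0 < α) (hρ : 0 < ρ)
    (hloc : ∀ u : H, ‖u‖ ≤ ρ → α * ‖u‖ ^ 2 ≤ ⟪gradient φ u, u⟫)
    (x x' x'' : ℝ → H)
    (hx : ∀ t ∈ Set.Ici (0:ℝ), HasDerivWithinAt x (x' t) (Set.Ici 0) t)
    (hx' : ∀ t ∈ Set.Ici (0:ℝ), HasDerivWithinAt x' (x'' t) (Set.Ici 0) t)
    (heq : ∀ t ∈ Set.Ici (0:ℝ), x'' t + gradient φ (x' t) + gradient f (x t) = 0) :
    ∃ K : ℝ, 0 ≤ K ∧ ∃ lam : ℝ, 0 < lam ∧ ∀ t ∈ Set.Ici (0:ℝ),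
      f (x t) - f xbar ≤ K * Real.exp (-lam * t) ∧
      ‖x t - xbar‖ ≤ K * Real.exp (-lam * t) ∧
      ‖x' t‖ ≤ K * Real.exp (-lam * t) := by
  have hf : StrongConvexOn univ μ f := strongConvexOn_iff_convex.2 hsc
  obtain ⟨R, hR, hvel⟩ := exists_norm_le_of_antitoneOn_lyapunov hxbar
    (antitoneOn_lyapunov_zero (convex_Ici 0) hfdiff (hφ.inner_gradient_self_nonneg hφdiff)
      hx hx' heq)
  obtain ⟨L, hL⟩ := hφlip (closedBall 0 R) isBounded_closedBall
  obtain ⟨a, ha, hcoer⟩ := hφ.convexOn.exists_pos_mul_sq_le_inner_gradient hφdiff hα hρ hloc R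
  obtain ⟨ε, hε, hε₁, hεμ, hεa⟩ := exists_lyapunov_rate (L := L) hμ ha
  have hφL : ∀ v : H, ‖v‖ ≤ R → ‖gradient φ v‖ ≤ L * ‖v‖ := fun v hv =>
    hL.norm_le_mul_norm (mem_closedBall_self hR) hφ.gradient_zero (mem_closedBall_zero_iff.2 hv)
  have hdecay : ∀ t ∈ Ici (0 : ℝ),
      lyapunov f xbar ε x x' t ≤ lyapunov f xbar ε x x' 0 * Real.exp (-ε * t) := fun t ht => by
    simpa using lyapunov_le_mul_exp (convex_Ici 0) hf hfdiff hμ hε.le hε₁ hεμ hεa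
      (fun t ht => hcoer _ (hvel t ht)) (fun t ht => hφL _ (hvel t ht)) hx hx' heq
      self_mem_Ici ht ht
  have hbounds := fun t (ht : t ∈ Ici (0 : ℝ)) =>
    le_mul_of_lyapunov_le hμ hε.le hε₁ hεμ
      (hf.mul_sq_le_sub_of_forall_le (hfdiff xbar) hxbar (x t)) (hdecay t ht)
  refine exists_exp_bound_of_sq_le (C := 4 * (1 + 1 / μ) * lyapunov f xbar ε x x' 0) ?_ hε
    fun t ht => ?_
  · simpa using (sq_nonneg _).trans (hbounds 0 self_mem_Ici).2.2
  · simpa only [← mul_assoc] using hbounds t ht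

/-- **(ADIGE-V) strongly convex case: exponential convergence rate (Theorem 5.1).**
If `f` is differentiable, `μ`-strongly convex, with `∇f` Lipschitz on bounded sets,
`x̄` is its (unique) minimizer, and `φ` is a differentiable damping potential with
`∇φ` Lipschitz on bounded sets, satisfying the local growth
`⟪∇φ(u), u⟫ ≥ α‖u‖²` for `‖u‖ ≤ ρ` and the global growth `φ(u) ≥ c‖u‖^p`, then every
`C²` solution of `ẍ + ∇φ(ẋ) + ∇f(x) = 0` converges exponentially: values, distance
to the minimizer and velocity. -/
theorem adigeV_strongly_convex_exponential_rate
    (μ : ℝ) (hμ : 0 < μ)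
    (f : H → ℝ) (hfdiff : Differentiable ℝ f)
    (hsc : ConvexOn ℝ Set.univ (fun y => f y - μ / 2 * ‖y‖ ^ 2))
    (hflip : ∀ s : Set H, IsBounded s → ∃ K : ℝ≥0, LipschitzOnWith K (gradient f) s)
    (xbar : H) (hxbar : ∀ y, f xbar ≤ f y)
    (φ : H → ℝ) (hφ : IsDampingPotential φ) (hφdiff : Differentiable ℝ φ)
    (hφlip : ∀ s : Set H, IsBounded s → ∃ K : ℝ≥0, LipschitzOnWith K (gradient φ) s)
    (α ρ : ℝ) (hα : 0 < α) (hρ : 0 < ρ)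
    (hloc : ∀ u : H, ‖u‖ ≤ ρ → α * ‖u‖ ^ 2 ≤ ⟪gradient φ u, u⟫)
    (p c : ℝ) (hp : 1 ≤ p) (hc : 0 < c) (hgrow : ∀ u : H, c * ‖u‖ ^ p ≤ φ u)
    (x x' x'' : ℝ → H)
    (hx : ∀ t ∈ Set.Ici (0:ℝ), HasDerivWithinAt x (x' t) (Set.Ici 0) t)
    (hx' : ∀ t ∈ Set.Ici (0:ℝ), HasDerivWithinAt x' (x'' t) (Set.Ici 0) t)
    (hx''c : ContinuousOn x'' (Set.Ici 0))
    (heq : ∀ t ∈ Set.Ici (0:ℝ), x'' t + gradient φ (x' t) + gradient f (x t) = 0) :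
    ∃ K : ℝ, 0 ≤ K ∧ ∃ lam : ℝ, 0 < lam ∧ ∀ t ∈ Set.Ici (0:ℝ),
      f (x t) - f xbar ≤ K * Real.exp (-lam * t) ∧
      ‖x t - xbar‖ ≤ K * Real.exp (-lam * t) ∧
      ‖x' t‖ ≤ K * Real.exp (-lam * t) :=
  adigeV_strongly_convex_exponential_rate_general μ hμ f hfdiff hsc xbar hxbar φ hφ hφdiff hφlip α ρ
    hα hρ hloc x x' x'' hx hx' heq
end
end

section
/- Let c > 0 and let v : [0,∞) → ℝ be twice continuously differentiable with v̇(0) > 0 and v̈(t) ≥ −c·v̇(t)² for all t ≥ 0. Then v̇(t) > 0 for all t ≥ 0 (so v is increasing), and v(t) → +∞ as t → ∞. -/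
/-!
The substitution `y = exp (c v)` turns the differential inequality into convexity:
`ÿ = c (v̈ + c v̇²) exp (c v) ≥ 0`. Hence `ẏ = c v̇ exp (c v)` is nondecreasing, so
`ẏ ≥ ẏ(0) > 0`, which gives `v̇ > 0`, and `y` grows at least linearly, so `y → ∞` and
therefore `v = (log y) / c → ∞`.
-/

open Set Filter Topology

section Ici

variable {f f' : ℝ → ℝ} {a : ℝ}

theorem monotoneOn_Ici_of_hasDerivWithinAt_nonneg
    (hf : ∀ t ∈ Ici a, HasDerivWithinAt f (f' t) (Ici a) t)
    (hf' : ∀ t ∈ Ioi a, 0 ≤ f' t) : MonotoneOn f (Ici a) := by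
  refine monotoneOn_of_hasDerivWithinAt_nonneg (f' := f') (convex_Ici a)
    (fun t ht => (hf t ht).continuousWithinAt) (fun t ht => ?_) (fun t ht => ?_)
  · rw [interior_Ici] at ht ⊢
    exact (hf t (Ioi_subset_Ici_self ht)).mono Ioi_subset_Ici_self
  · rw [interior_Ici] at ht
    exact hf' t ht

theorem tendsto_atTop_of_hasDerivWithinAt_Ici_ge {m : ℝ} (hm : 0 < m)
    (hf : ∀ t ∈ Ici a, HasDerivWithinAt f (f' t) (Ici a) t)
    (hf' : ∀ t ∈ Ioi a, m ≤ f' t) : Tendsto f atTop atTop := by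
  have hmono : MonotoneOn (fun t => f t - m * t) (Ici a) :=
    monotoneOn_Ici_of_hasDerivWithinAt_nonneg
      (fun t ht => (hf t ht).sub ((hasDerivWithinAt_id t _).const_mul m))
      (fun t ht => by simpa using hf' t ht)
  have hlin : Tendsto (fun t => f a - m * a + m * t) atTop atTop :=
    tendsto_atTop_add_const_left _ _ (tendsto_id.const_mul_atTop hm)
  refine tendsto_atTop_mono' atTop ?_ hlin
  filter_upwards [eventually_ge_atTop a] with t ht
  linarith [hmono self_mem_Ici ht ht]

end Ici

section Riccati

variable {c a : ℝ} {v v' v'' : ℝ → ℝ}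

theorem hasDerivWithinAt_exp_const_mul (hv : ∀ t ∈ Ici a, HasDerivWithinAt v (v' t) (Ici a) t)
    {t : ℝ} (ht : t ∈ Ici a) :
    HasDerivWithinAt (fun s => Real.exp (c * v s)) (c * v' t * Real.exp (c * v t)) (Ici a) t :=
  ((hv t ht).const_mul c).exp.congr_deriv (mul_comm _ _)

theorem monotoneOn_mul_deriv_mul_exp (hc : 0 ≤ c)
    (hv : ∀ t ∈ Ici a, HasDerivWithinAt v (v' t) (Ici a) t)
    (hv' : ∀ t ∈ Ici a, HasDerivWithinAt v' (v'' t) (Ici a) t)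
    (hineq : ∀ t ∈ Ici a, -c * v' t ^ 2 ≤ v'' t) :
    MonotoneOn (fun t => c * v' t * Real.exp (c * v t)) (Ici a) := by
  refine monotoneOn_Ici_of_hasDerivWithinAt_nonneg
    (f' := fun t => c * (v'' t + c * v' t ^ 2) * Real.exp (c * v t))
    (fun t ht => (((hv' t ht).const_mul c).mul
      (hasDerivWithinAt_exp_const_mul hv ht)).congr_deriv (by ring)) (fun t ht => ?_)
  have := hineq t (Ioi_subset_Ici_self ht)
  have : 0 ≤ v'' t + c * v' t ^ 2 := by linarith
  positivity

end Riccati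

theorem increasing_to_infinity_general
    (c : ℝ) (hc : 0 < c) (v v' v'' : ℝ → ℝ)
    (hv : ∀ t ∈ Set.Ici (0:ℝ), HasDerivWithinAt v (v' t) (Set.Ici 0) t)
    (hv' : ∀ t ∈ Set.Ici (0:ℝ), HasDerivWithinAt v' (v'' t) (Set.Ici 0) t)
    (h0 : 0 < v' 0)
    (hineq : ∀ t ∈ Set.Ici (0:ℝ), -c * (v' t) ^ 2 ≤ v'' t) :
    (∀ t ∈ Set.Ici (0:ℝ), 0 < v' t) ∧
      Tendsto v atTop atTop := by
  set g : ℝ → ℝ := fun t => c * v' t * Real.exp (c * v t)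
  have hg0 : 0 < g 0 := by positivity
  have hg : ∀ t ∈ Ici (0:ℝ), g 0 ≤ g t := fun t ht =>
    monotoneOn_mul_deriv_mul_exp hc.le hv hv' hineq self_mem_Ici ht ht
  refine ⟨fun t ht => ?_, ?_⟩
  · have : 0 < c * v' t := pos_of_mul_pos_left (hg0.trans_le (hg t ht)) (Real.exp_pos _).le
    exact pos_of_mul_pos_right this hc.le
  · have hexp : Tendsto (fun t => Real.exp (c * v t)) atTop atTop :=
      tendsto_atTop_of_hasDerivWithinAt_Ici_ge hg0
        (fun t ht => hasDerivWithinAt_exp_const_mul hv ht)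
        (fun t ht => hg t (Ioi_subset_Ici_self ht))
    exact (tendsto_const_mul_atTop_of_pos hc).mp (Real.tendsto_exp_comp_atTop.mp hexp)

/-- **Lemma 6.1.**  If `v : [0,∞) → ℝ` is twice continuously differentiable with
`v̇(0) > 0` and `v̈(t) ≥ -c v̇(t)²` for all `t ≥ 0` (with `c > 0`), then `v̇ > 0` on
`[0,∞)` (so `v` is increasing) and `v(t) → +∞` as `t → ∞`. -/
theorem increasing_to_infinity
    (c : ℝ) (hc : 0 < c) (v v' v'' : ℝ → ℝ)
    (hv : ∀ t ∈ Set.Ici (0:ℝ), HasDerivWithinAt v (v' t) (Set.Ici 0) t)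
    (hv' : ∀ t ∈ Set.Ici (0:ℝ), HasDerivWithinAt v' (v'' t) (Set.Ici 0) t)
    (hv''c : ContinuousOn v'' (Set.Ici 0))
    (h0 : 0 < v' 0)
    (hineq : ∀ t ∈ Set.Ici (0:ℝ), -c * (v' t) ^ 2 ≤ v'' t) :
    (∀ t ∈ Set.Ici (0:ℝ), 0 < v' t) ∧
      Tendsto v atTop atTop :=
  increasing_to_infinity_general c hc v v' v'' hv hv' h0 hineq
end

section
/- Let f : ℝᴺ → ℝ be differentiable with inf f > −∞, let φ : ℝᴺ → [0,∞) be convex and differentiable with φ(0) = 0 and φ(u) ≥ γ‖u‖² for all u ∈ ℝᴺ (γ > 0), and let h > 0. Let (x_n) be a sequence in ℝᴺ such that, setting u_n = (x_{n+1} − x_n)/h, one has u_{n+1} − u_n + h∇φ(u_{n+1}) + h∇f(x_{n+1}) = 0 for all n, and suppose ∇f is L-Lipschitz on a ball containing all iterates x_n. Define W_n = (1/2)‖u_n‖² + f(x_{n+1}). Then for all n: W_{n+1} − W_n + h(γ − Lh/2)‖u_{n+1}‖² ≤ 0. Consequently, if γ > Lh/2, then Σ_n ‖u_n‖² < ∞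 and u_n → 0 as n → ∞. -/
/-!
Pairing the scheme with `u_{n+1}` and using `2⟪u_n, u_{n+1}⟫ ≤ ‖u_n‖² + ‖u_{n+1}‖²` turns it into
an estimate of the kinetic part of `W_{n+1} - W_n`. Convexity of `φ` with `φ 0 = 0` gives
`⟪∇φ(u), u⟫ ≥ φ(u) ≥ γ‖u‖²`, and the descent lemma for `f`, whose gradient is `L`-Lipschitz on the
convex ball containing the segment `[x_{n+1}, x_{n+2}]`, bounds `f(x_{n+2}) - f(x_{n+1})` by
`h⟪∇f(x_{n+1}), u_{n+1}⟫ + L h²/2 ‖u_{n+1}‖²`. Together these give the energy inequality. When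
`γ > Lh/2` it telescopes, and since `W` is bounded below (because `f` is), `Σ ‖u_n‖²` is bounded.
-/

open Set Filter Topology
open scoped RealInnerProductSpace NNReal

section InnerProductSpace

variable {E : Type*} [NormedAddCommGroup E] [InnerProductSpace ℝ E] [CompleteSpace E]

theorem HasGradientAt.hasDerivAt_comp_lineMap {f : E → ℝ} {a b : E} {t : ℝ} {f' : E}
    (hf : HasGradientAt f f' (AffineMap.lineMap a b t)) :
    HasDerivAt (f ∘ AffineMap.lineMap (k := ℝ) a b) ⟪f', b - a⟫ t := by
  simpa [hf.hasFDerivAt.fderiv] using hf.hasFDerivAt.comp_hasDerivAt t AffineMap.hasDerivAt_lineMap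

theorem ConvexOn.sub_le_inner_gradient_s11 {φ : E → ℝ} (hconv : ConvexOn ℝ univ φ) {x : E}
    (hdiff : DifferentiableAt ℝ φ x) (y : E) : φ x - φ y ≤ ⟪gradient φ x, x - y⟫ := by
  have hline : ConvexOn ℝ univ (φ ∘ AffineMap.lineMap (k := ℝ) y x) := hconv.comp_affineMap _
  have hderiv : HasDerivAt (φ ∘ AffineMap.lineMap (k := ℝ) y x) ⟪gradient φ x, x - y⟫ 1 :=
    HasGradientAt.hasDerivAt_comp_lineMap (by simpa using hdiff.hasGradientAt)
  simpa [slope] using hline.slope_le_of_hasDerivAt (mem_univ (0 : ℝ)) (mem_univ 1) one_pos hderiv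

theorem LipschitzOnWith.inner_gradient_sub_le {f : E → ℝ} {L : ℝ≥0} {s : Set E}
    (hLip : LipschitzOnWith L (gradient f) s) {a z : E} (ha : a ∈ s) (hz : z ∈ s) (v : E) :
    ⟪gradient f z - gradient f a, v⟫ ≤ L * ‖z - a‖ * ‖v‖ := by
  calc ⟪gradient f z - gradient f a, v⟫ ≤ ‖gradient f z - gradient f a‖ * ‖v‖ :=
        real_inner_le_norm _ _
    _ ≤ L * ‖z - a‖ * ‖v‖ := by
        gcongr
        simpa only [dist_eq_norm] using hLip.dist_le_mul z hz a ha

theorem Convex.apply_le_add_inner_gradient_add_sq {f : E → ℝ} (hf : Differentiable ℝ f)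
    {L : ℝ≥0} {s : Set E} (hs : Convex ℝ s) (hLip : LipschitzOnWith L (gradient f) s) {a b : E}
    (ha : a ∈ s) (hb : b ∈ s) :
    f b ≤ f a + ⟪gradient f a, b - a⟫ + L / 2 * ‖b - a‖ ^ 2 := by
  have hderiv (t : ℝ) : HasDerivAt (f ∘ AffineMap.lineMap (k := ℝ) a b)
      ⟪gradient f (AffineMap.lineMap a b t), b - a⟫ t :=
    (hf _).hasGradientAt.hasDerivAt_comp_lineMap
  have hbound (t : ℝ) : HasDerivAt
      (fun t => f a + t * ⟪gradient f a, b - a⟫ + L / 2 * t ^ 2 * ‖b - a‖ ^ 2)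
      (⟪gradient f a, b - a⟫ + L * t * ‖b - a‖ ^ 2) t := by
    refine ((((hasDerivAt_id' t).mul_const _).const_add (f a)).add
      (((hasDerivAt_pow 2 t).const_mul ((L : ℝ) / 2)).mul_const (‖b - a‖ ^ 2))).congr_deriv ?_
    ring
  have hderiv_le (t : ℝ) (ht : t ∈ Ico 0 1) : ⟪gradient f (AffineMap.lineMap a b t), b - a⟫ ≤
      ⟪gradient f a, b - a⟫ + L * t * ‖b - a‖ ^ 2 := by
    have hdist : ‖AffineMap.lineMap a b t - a‖ = t * ‖b - a‖ := by
      rw [← dist_eq_norm, dist_lineMap_left, Real.norm_of_nonneg ht.1, dist_eq_norm']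
    have := hLip.inner_gradient_sub_le ha (hs.lineMap_mem ha hb (Ico_subset_Icc_self ht)) (b - a)
    rw [inner_sub_left, hdist] at this
    linarith
  simpa using image_le_of_deriv_right_le_deriv_boundary
    (fun t _ => (hderiv t).continuousAt.continuousWithinAt) (fun t _ => (hderiv t).hasDerivWithinAt)
    (by simp) (fun t _ => (hbound t).continuousAt.continuousWithinAt)
    (fun t _ => (hbound t).hasDerivWithinAt) hderiv_le (right_mem_Icc.2 zero_le_one)

end InnerProductSpace

-- `p`, `q`, `f₁`, `f₂` stand for `∇f(x_{n+1})`, `∇φ(u_{n+1})`, `f(x_{n+1})`, `f(x_{n+2})`.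
theorem discrete_energy_step {E : Type*} [NormedAddCommGroup E] [InnerProductSpace ℝ E]
    {u₀ u₁ p q : E} {f₁ f₂ h γ L : ℝ} (hh : 0 ≤ h)
    (hrec : u₁ - u₀ + h • q + h • p = 0) (hq : γ * ‖u₁‖ ^ 2 ≤ ⟪q, u₁⟫)
    (hdesc : f₂ ≤ f₁ + h * ⟪p, u₁⟫ + L / 2 * h ^ 2 * ‖u₁‖ ^ 2) :
    (1 / 2 * ‖u₁‖ ^ 2 + f₂) - (1 / 2 * ‖u₀‖ ^ 2 + f₁) + h * (γ - L * h / 2) * ‖u₁‖ ^ 2 ≤ 0 := by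
  have hinner : ‖u₁‖ ^ 2 - ⟪u₀, u₁⟫ + h * ⟪q, u₁⟫ + h * ⟪p, u₁⟫ = 0 := by
    simpa only [inner_add_left, inner_sub_left, real_inner_smul_left, real_inner_self_eq_norm_sq,
      inner_zero_left] using congrArg (⟪·, u₁⟫) hrec
  have hyoung : 2 * ⟪u₀, u₁⟫ ≤ ‖u₀‖ ^ 2 + ‖u₁‖ ^ 2 := by
    linarith [norm_sub_sq_real u₀ u₁, sq_nonneg ‖u₀ - u₁‖]
  nlinarith [mul_le_mul_of_nonneg_left hq hh]

theorem summable_of_add_mul_le_of_bddBelow {W a : ℕ → ℝ} {c : ℝ} (hc : 0 < c)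
    (ha : ∀ n, 0 ≤ a n) (hW : BddBelow (range W)) (hdec : ∀ n, W (n + 1) + c * a n ≤ W n) :
    Summable a := by
  obtain ⟨B, hB⟩ := hW
  refine summable_of_sum_range_le ha (c := (W 0 - B) / c) fun n => ?_
  rw [le_div_iff₀ hc]
  calc (∑ k ∈ Finset.range n, a k) * c = ∑ k ∈ Finset.range n, c * a k := by
        rw [Finset.sum_mul]; simp only [mul_comm]
    _ ≤ ∑ k ∈ Finset.range n, (W k - W (k + 1)) :=
        Finset.sum_le_sum fun k _ => by linarith [hdec k]
    _ = W 0 - W n := Finset.sum_range_sub' W n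
    _ ≤ W 0 - B := by linarith [hB (mem_range_self n)]

theorem discrete_energy_decay_general
    (N : ℕ) (f : EuclideanSpace ℝ (Fin N) → ℝ)
    (hfdiff : Differentiable ℝ f) (hfbdd : BddBelow (Set.range f))
    (φ : EuclideanSpace ℝ (Fin N) → ℝ)
    (hφconv : ConvexOn ℝ Set.univ φ) (hφdiff : Differentiable ℝ φ) (hφ0 : φ 0 = 0)
    (γ : ℝ)
    (hgrow : ∀ u : EuclideanSpace ℝ (Fin N), γ * ‖u‖ ^ 2 ≤ φ u)
    (h : ℝ) (hh : 0 < h)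
    (x u : ℕ → EuclideanSpace ℝ (Fin N))
    (hu : ∀ n, u n = (1 / h) • (x (n + 1) - x n))
    (hrec : ∀ n, u (n + 1) - u n + h • gradient φ (u (n + 1))
        + h • gradient f (x (n + 1)) = 0)
    (L : ℝ≥0) (ctr : EuclideanSpace ℝ (Fin N)) (R : ℝ)
    (hball : ∀ n, x n ∈ Metric.closedBall ctr R)
    (hLip : LipschitzOnWith L (gradient f) (Metric.closedBall ctr R)) :
    (∀ n, ((1:ℝ)/2 * ‖u (n + 1)‖ ^ 2 + f (x (n + 2)))
        - ((1:ℝ)/2 * ‖u n‖ ^ 2 + f (x (n + 1)))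
        + h * (γ - (L : ℝ) * h / 2) * ‖u (n + 1)‖ ^ 2 ≤ 0) ∧
    ((L : ℝ) * h / 2 < γ →
      Summable (fun n => ‖u n‖ ^ 2) ∧ Tendsto u atTop (𝓝 0)) := by
  have hstep (n : ℕ) : x (n + 1) - x n = h • u n := by
    rw [hu n, smul_smul, mul_one_div_cancel hh.ne', one_smul]
  have hdiss (v : EuclideanSpace ℝ (Fin N)) : γ * ‖v‖ ^ 2 ≤ ⟪gradient φ v, v⟫ := by
    have := hφconv.sub_le_inner_gradient_s11 (hφdiff v) 0
    rw [hφ0, sub_zero, sub_zero] at this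
    exact (hgrow v).trans this
  have hdesc (n : ℕ) : f (x (n + 2)) ≤ f (x (n + 1)) + h * ⟪gradient f (x (n + 1)), u (n + 1)⟫
      + L / 2 * h ^ 2 * ‖u (n + 1)‖ ^ 2 := by
    have := (convex_closedBall ctr R).apply_le_add_inner_gradient_add_sq hfdiff hLip
      (hball (n + 1)) (hball (n + 2))
    rwa [hstep, real_inner_smul_right, norm_smul, Real.norm_of_nonneg hh.le, mul_pow,
      ← mul_assoc] at this
  have hdecay (n : ℕ) := discrete_energy_step hh.le (hrec n) (hdiss _) (hdesc n)
  refine ⟨hdecay, fun hlt => ?_⟩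
  obtain ⟨B, hB⟩ := hfbdd
  have hbdd : BddBelow (range fun n => 1 / 2 * ‖u n‖ ^ 2 + f (x (n + 1))) := ⟨B, by
    rintro _ ⟨n, rfl⟩
    nlinarith [hB (mem_range_self (x (n + 1))), sq_nonneg ‖u n‖]⟩
  have hsum : Summable fun n => ‖u n‖ ^ 2 := (summable_nat_add_iff 1).mp <|
    summable_of_add_mul_le_of_bddBelow (a := fun n => ‖u (n + 1)‖ ^ 2)
      (c := h * (γ - L * h / 2)) (mul_pos hh (by linarith)) (fun _ => by positivity) hbdd
      fun n => by linarith [hdecay n]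
  refine ⟨hsum, tendsto_zero_iff_norm_tendsto_zero.2 ?_⟩
  simpa using hsum.tendsto_atTop_zero.sqrt

/-- **Discrete energy decay (Lemma 8.1).**
For the semi-implicit discretization `u_{n+1} - u_n + h∇φ(u_{n+1}) + h∇f(x_{n+1}) = 0`
of the inertial system (with discrete velocity `u_n = (x_{n+1} - x_n)/h`), if `∇f` is
`L`-Lipschitz on a ball containing all iterates and `φ(u) ≥ γ‖u‖²`, then the discrete
energies `W_n = ½‖u_n‖² + f(x_{n+1})` satisfy
`W_{n+1} - W_n + h(γ - Lh/2)‖u_{n+1}‖² ≤ 0`; consequently, if `γ > Lh/2` then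
`Σ‖u_n‖² < ∞` and `u_n → 0`. -/
theorem discrete_energy_decay
    (N : ℕ) (f : EuclideanSpace ℝ (Fin N) → ℝ)
    (hfdiff : Differentiable ℝ f) (hfbdd : BddBelow (Set.range f))
    (φ : EuclideanSpace ℝ (Fin N) → ℝ)
    (hφconv : ConvexOn ℝ Set.univ φ) (hφdiff : Differentiable ℝ φ) (hφ0 : φ 0 = 0)
    (γ : ℝ) (hγ : 0 < γ)
    (hgrow : ∀ u : EuclideanSpace ℝ (Fin N), γ * ‖u‖ ^ 2 ≤ φ u)
    (h : ℝ) (hh : 0 < h)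
    (x u : ℕ → EuclideanSpace ℝ (Fin N))
    (hu : ∀ n, u n = (1 / h) • (x (n + 1) - x n))
    (hrec : ∀ n, u (n + 1) - u n + h • gradient φ (u (n + 1))
        + h • gradient f (x (n + 1)) = 0)
    (L : ℝ≥0) (ctr : EuclideanSpace ℝ (Fin N)) (R : ℝ)
    (hball : ∀ n, x n ∈ Metric.closedBall ctr R)
    (hLip : LipschitzOnWith L (gradient f) (Metric.closedBall ctr R)) :
    (∀ n, ((1:ℝ)/2 * ‖u (n + 1)‖ ^ 2 + f (x (n + 2)))
        - ((1:ℝ)/2 * ‖u n‖ ^ 2 + f (x (n + 1)))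
        + h * (γ - (L : ℝ) * h / 2) * ‖u (n + 1)‖ ^ 2 ≤ 0) ∧
    ((L : ℝ) * h / 2 < γ →
      Summable (fun n => ‖u n‖ ^ 2) ∧ Tendsto u atTop (𝓝 0)) :=
  discrete_energy_decay_general N f hfdiff hfbdd φ hφconv hφdiff hφ0 γ hgrow h hh x u hu hrec L ctr
    R hball hLip
end
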